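/- arXiv:2602.17447 — 9 statements merged into one kernel-verified Lean document; each statement's English description precedes it below -/
import Mathlib

section
/- Let X and Y be Polish spaces, π : X → Y continuous, and L : X → [0,+∞] lower semicontinuous. Assume (A6): there exists κ > 0 such that for every y ∈ Y there exists x ∈ X with π(x) = y and L(x) ≤ κ; and (A7): for every κ > 0 the sublevel set {x ∈ X : L(x) ≤ κ} is compact. Then there exists a Borel-measurable function Φ : Y → X such that for every y ∈ Y one has π(Φ(y)) = y and L(Φ(y)) ≤ κ. -/
open MeasureTheory Filter Topology Set
open scoped ENNReal

noncomputable section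

namespace MeasSelAux

variable {X Y : Type*} [MetricSpace X]

/-- Recursive scheme: shrink the fiber set by intersecting with small closed balls
around points of a dense sequence. -/
def selD (u : ℕ → X) (F : Y → Set X) : ℕ → Y → Set X
  | 0, y => F y
  | n + 1, y =>
      selD u F n y ∩ Metric.closedBall
        (u (sInf {i | (selD u F n y ∩ Metric.closedBall (u i) ((1/2 : ℝ) ^ n)).Nonempty}))
        ((1/2 : ℝ) ^ n)

/-- The index chosen at stage `n`. -/
def selG (u : ℕ → X) (F : Y → Set X) (n : ℕ) (y : Y) : ℕ :=
  sInf {i | (selD u F n y ∩ Metric.closedBall (u i) ((1/2 : ℝ) ^ n)).Nonempty}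

lemma selD_succ (u : ℕ → X) (F : Y → Set X) (n : ℕ) (y : Y) :
    selD u F (n + 1) y
      = selD u F n y ∩ Metric.closedBall (u (selG u F n y)) ((1/2 : ℝ) ^ n) := rfl

lemma selG_set_nonempty (u : ℕ → X) (F : Y → Set X) (hu : DenseRange u) {n : ℕ} {y : Y}
    (h : (selD u F n y).Nonempty) :
    {i | (selD u F n y ∩ Metric.closedBall (u i) ((1/2 : ℝ) ^ n)).Nonempty}.Nonempty := by
  obtain ⟨x, hx⟩ := h
  obtain ⟨i, hi⟩ := hu.exists_dist_lt x (by positivity : (0:ℝ) < (1/2 : ℝ) ^ n)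
  exact ⟨i, ⟨x, hx, by simpa [Metric.mem_closedBall] using hi.le⟩⟩

lemma selD_nonempty (u : ℕ → X) (F : Y → Set X) (hu : DenseRange u)
    (hF : ∀ y, (F y).Nonempty) : ∀ n y, (selD u F n y).Nonempty := by
  intro n
  induction n with
  | zero => exact hF
  | succ n ih =>
      intro y
      have h := Nat.sInf_mem (selG_set_nonempty u F hu (ih y))
      exact h

lemma selD_subset (u : ℕ → X) (F : Y → Set X) : ∀ n y, selD u F n y ⊆ F y := by
  intro n
  induction n with
  | zero => exact fun y => subset_rfl
  | succ n ih => exact fun y => (inter_subset_left).trans (ih y)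

lemma selD_mono (u : ℕ → X) (F : Y → Set X) {m n : ℕ} (h : m ≤ n) (y : Y) :
    selD u F n y ⊆ selD u F m y := by
  induction n with
  | zero => simpa [Nat.le_zero.mp h]
  | succ n ih =>
      rcases Nat.lt_or_ge m (n + 1) with h' | h'
      · exact (inter_subset_left).trans (ih (Nat.lt_succ_iff.mp h'))
      · have : m = n + 1 := le_antisymm h h'
        simp [this]

lemma dist_le_of_mem_selD (u : ℕ → X) (F : Y → Set X) {n : ℕ} {y : Y} {x : X}
    (hx : x ∈ selD u F (n + 1) y) : dist x (u (selG u F n y)) ≤ (1/2 : ℝ) ^ n := by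
  have h := hx.2
  rw [Metric.mem_closedBall] at h
  exact h

lemma selG_mem (u : ℕ → X) (F : Y → Set X) {n : ℕ} {y : Y}
    (h : {i | (selD u F n y ∩ Metric.closedBall (u i) ((1/2 : ℝ) ^ n)).Nonempty}.Nonempty) :
    (selD u F n y ∩ Metric.closedBall (u (selG u F n y)) ((1/2 : ℝ) ^ n)).Nonempty :=
  Nat.sInf_mem h

lemma selD_measurable [MeasurableSpace Y] (u : ℕ → X) (F : Y → Set X) (hu : DenseRange u)
    (hF : ∀ y, (F y).Nonempty)
    (h0 : ∀ C : Set X, IsClosed C → MeasurableSet {y | (F y ∩ C).Nonempty}) :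
    ∀ n, ∀ C : Set X, IsClosed C → MeasurableSet {y | (selD u F n y ∩ C).Nonempty} := by
  intro n
  induction n with
  | zero => exact h0
  | succ n ih =>
      intro C hC
      have hE : ∀ i : ℕ,
          MeasurableSet {y | (selD u F n y ∩ Metric.closedBall (u i) ((1/2 : ℝ) ^ n)).Nonempty} :=
        fun i => ih _ Metric.isClosed_closedBall
      have hG : ∀ i : ℕ, MeasurableSet {y | selG u F n y = i} := by
        intro i
        have : {y : Y | selG u F n y = i}
            = {y | (selD u F n y ∩ Metric.closedBall (u i) ((1/2 : ℝ) ^ n)).Nonempty}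
              ∩ ⋂ j < i,
                {y | (selD u F n y ∩ Metric.closedBall (u j) ((1/2 : ℝ) ^ n)).Nonempty}ᶜ := by
          ext y
          simp only [mem_setOf_eq, mem_inter_iff, mem_iInter, mem_compl_iff]
          constructor
          · rintro rfl
            refine ⟨Nat.sInf_mem (selG_set_nonempty u F hu (selD_nonempty u F hu hF n y)), ?_⟩
            exact fun j hj => Nat.notMem_of_lt_sInf hj
          · rintro ⟨hi, hlt⟩
            exact le_antisymm (Nat.sInf_le hi)
              (Nat.le_of_not_lt fun h => hlt _ h (selG_mem u F ⟨i, hi⟩))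
        rw [this]
        exact (hE i).inter (MeasurableSet.iInter fun j =>
          MeasurableSet.iInter fun _ => (hE j).compl)
      have key : {y | (selD u F (n + 1) y ∩ C).Nonempty}
          = ⋃ i : ℕ, ({y | selG u F n y = i} ∩
              {y | (selD u F n y ∩ (Metric.closedBall (u i) ((1/2 : ℝ) ^ n) ∩ C)).Nonempty}) := by
        ext y
        simp only [mem_setOf_eq, mem_iUnion, mem_inter_iff, selD_succ]
        constructor
        · intro h
          exact ⟨selG u F n y, rfl, by
            obtain ⟨x, ⟨hx1, hx2⟩, hx3⟩ := h
            exact ⟨x, hx1, hx2, hx3⟩⟩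
        · rintro ⟨i, rfl, x, hx1, hx2, hx3⟩
          exact ⟨x, ⟨hx1, hx2⟩, hx3⟩
      rw [key]
      exact MeasurableSet.iUnion fun i =>
        (hG i).inter (ih _ (Metric.isClosed_closedBall.inter hC))

lemma selG_measurable [MeasurableSpace Y] (u : ℕ → X) (F : Y → Set X) (hu : DenseRange u)
    (hF : ∀ y, (F y).Nonempty)
    (h0 : ∀ C : Set X, IsClosed C → MeasurableSet {y | (F y ∩ C).Nonempty}) (n : ℕ) :
    Measurable (selG u F n) := by
  have hE : ∀ i : ℕ,
      MeasurableSet {y | (selD u F n y ∩ Metric.closedBall (u i) ((1/2 : ℝ) ^ n)).Nonempty} :=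
    fun i => selD_measurable u F hu hF h0 n _ Metric.isClosed_closedBall
  apply measurable_to_nat
  intro y
  have : selG u F n ⁻¹' {selG u F n y}
      = {z | (selD u F n z ∩ Metric.closedBall (u (selG u F n y)) ((1/2 : ℝ) ^ n)).Nonempty}
        ∩ ⋂ j < selG u F n y,
          {z | (selD u F n z ∩ Metric.closedBall (u j) ((1/2 : ℝ) ^ n)).Nonempty}ᶜ := by
    ext z
    simp only [mem_preimage, mem_singleton_iff, mem_inter_iff, mem_iInter, mem_compl_iff,
      mem_setOf_eq]
    constructor
    · rintro h
      rw [← h]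
      refine ⟨Nat.sInf_mem (selG_set_nonempty u F hu (selD_nonempty u F hu hF n z)), ?_⟩
      exact fun j hj => Nat.notMem_of_lt_sInf hj
    · rintro ⟨hi, hlt⟩
      exact le_antisymm (Nat.sInf_le hi)
        (Nat.le_of_not_lt fun h => hlt _ h (selG_mem u F ⟨_, hi⟩))
  rw [this]
  exact (hE _).inter (MeasurableSet.iInter fun j =>
    MeasurableSet.iInter fun _ => (hE j).compl)

end MeasSelAux

open MeasSelAux

/-- The measurable selection lemma (Lemma `PhiBorel`): under (A6) and (A7), there is a
Borel-measurable map `Φ : Y → X` selecting, for each `y`, a point `x` with `π x = y` and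
`L x ≤ κ`. -/
theorem measurable_selection_of_compact_sublevels
    {X Y : Type*}
    [TopologicalSpace X] [PolishSpace X] [MeasurableSpace X] [BorelSpace X]
    [TopologicalSpace Y] [PolishSpace Y] [MeasurableSpace Y] [BorelSpace Y]
    (π : X → Y) (L : X → ℝ≥0∞)
    (hπ : Continuous π) (hL : LowerSemicontinuous L)
    (κ : ℝ) (hκpos : 0 < κ)
    (hA6 : ∀ y : Y, ∃ x : X, π x = y ∧ L x ≤ ENNReal.ofReal κ)
    (hA7 : ∀ c : ℝ, 0 < c → IsCompact {x : X | L x ≤ ENNReal.ofReal c}) :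
    ∃ Φ : Y → X, Measurable Φ ∧ ∀ y : Y, π (Φ y) = y ∧ L (Φ y) ≤ ENNReal.ofReal κ := by
  classical
  cases isEmpty_or_nonempty X with
  | inl hX =>
      have hYempty : IsEmpty Y := ⟨fun y => by obtain ⟨x, -⟩ := hA6 y; exact hX.elim x⟩
      exact ⟨fun y => (hYempty.elim y), measurable_of_empty _, fun y => (hYempty.elim y)⟩
  | inr hX =>
  letI := TopologicalSpace.upgradeIsCompletelyMetrizable X
  -- the compact sublevel set
  set K : Set X := {x : X | L x ≤ ENNReal.ofReal κ} with hK
  have hKcomp : IsCompact K := hA7 κ hκpos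
  -- fibers
  set F : Y → Set X := fun y => K ∩ π ⁻¹' {y} with hF
  have hFne : ∀ y, (F y).Nonempty := fun y => by
    obtain ⟨x, hx1, hx2⟩ := hA6 y
    exact ⟨x, hx2, hx1⟩
  have hFclosed : ∀ y, IsClosed (F y) :=
    fun y => (hKcomp.isClosed).inter (isClosed_singleton.preimage hπ)
  have h0 : ∀ C : Set X, IsClosed C → MeasurableSet {y | (F y ∩ C).Nonempty} := by
    intro C hC
    have himg : {y | (F y ∩ C).Nonempty} = π '' (K ∩ C) := by
      ext y
      simp only [mem_setOf_eq, mem_image, Set.Nonempty, hF, mem_inter_iff, mem_preimage,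
        mem_singleton_iff]
      constructor
      · rintro ⟨x, ⟨hxK, hxy⟩, hxC⟩; exact ⟨x, ⟨hxK, hxC⟩, hxy⟩
      · rintro ⟨x, ⟨hxK, hxC⟩, hxy⟩; exact ⟨x, ⟨hxK, hxy⟩, hxC⟩
    rw [himg]
    exact ((hKcomp.inter_right hC).image hπ).isClosed.measurableSet
  -- dense sequence
  obtain ⟨u, hu⟩ := TopologicalSpace.exists_dense_seq X
  -- the approximating sequence
  set s : ℕ → Y → X := fun n y => u (selG u F n y) with hs
  have hcauchy : ∀ y, CauchySeq fun n => s n y := by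
    intro y
    refine cauchySeq_of_le_geometric (1/2 : ℝ) 2 (by norm_num) fun n => ?_
    obtain ⟨x, hx⟩ := selD_nonempty u F hu hFne (n + 2) y
    have h1 : dist x (s n y) ≤ (1/2 : ℝ) ^ n :=
      dist_le_of_mem_selD u F (selD_mono u F (by omega) y hx)
    have h2 : dist x (s (n + 1) y) ≤ (1/2 : ℝ) ^ (n + 1) :=
      dist_le_of_mem_selD u F hx
    calc dist (s n y) (s (n + 1) y) ≤ dist (s n y) x + dist x (s (n + 1) y) := dist_triangle _ _ _
      _ ≤ (1/2 : ℝ) ^ n + (1/2 : ℝ) ^ (n + 1) := by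
          rw [dist_comm (s n y) x]; exact add_le_add h1 h2
      _ ≤ 2 * (1/2 : ℝ) ^ n := by
          rw [pow_succ]; nlinarith [pow_pos (by norm_num : (0:ℝ) < 1/2) n]
  have hlim : ∀ y, ∃ x, Tendsto (fun n => s n y) atTop (𝓝 x) :=
    fun y => cauchySeq_tendsto_of_complete (hcauchy y)
  set Φ : Y → X := fun y => (hlim y).choose with hΦ
  have hΦlim : ∀ y, Tendsto (fun n => s n y) atTop (𝓝 (Φ y)) := fun y => (hlim y).choose_spec
  -- Φ y ∈ F y
  have hΦmem : ∀ y, Φ y ∈ F y := by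
    intro y
    set x : ℕ → X := fun n => (selD_nonempty u F hu hFne (n + 1) y).choose with hxdef
    have hxmem : ∀ n, x n ∈ selD u F (n + 1) y :=
      fun n => (selD_nonempty u F hu hFne (n + 1) y).choose_spec
    have hdist : ∀ n, dist (x n) (s n y) ≤ (1/2 : ℝ) ^ n :=
      fun n => dist_le_of_mem_selD u F (hxmem n)
    have hdist0 : Tendsto (fun n => dist (s n y) (x n)) atTop (𝓝 0) := by
      have hgeo : Tendsto (fun n : ℕ => (1/2 : ℝ) ^ n) atTop (𝓝 0) :=
        tendsto_pow_atTop_nhds_zero_of_lt_one (by norm_num) (by norm_num)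
      refine squeeze_zero (fun n => dist_nonneg) (fun n => ?_) hgeo
      rw [dist_comm]; exact hdist n
    have hxlim : Tendsto x atTop (𝓝 (Φ y)) := (hΦlim y).congr_dist hdist0
    exact (hFclosed y).mem_of_tendsto hxlim
      (Eventually.of_forall fun n => selD_subset u F (n + 1) y (hxmem n))
  refine ⟨Φ, ?_, fun y => ⟨(hΦmem y).2, (hΦmem y).1⟩⟩
  -- measurability
  have hsmeas : ∀ n, Measurable (s n) := by
    intro n
    exact (measurable_from_top).comp (selG_measurable u F hu hFne h0 n)
  exact measurable_of_tendsto_metrizable hsmeas (tendsto_pi_nhds.2 hΦlim)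
end
end

section
/- Under assumptions (A6), (A7), and (A8), for every m₀ ∈ 𝓟(Y) the set dom 𝓙 ∩ 𝓟_{m₀}(X) is nonempty and convex, where dom 𝓙 = {Q ∈ 𝓟(X) : 𝓙(Q) < +∞}. -/
open MeasureTheory Filter Topology Set
open scoped ENNReal

noncomputable section

/-- The individual cost of `x` when the population plays `Q`:
`F(x,Q) = L(x) + ∫ H(x,·) dQ`. -/
def Fcost {X : Type*} [MeasurableSpace X] (L : X → ℝ≥0∞) (H : X → X → ℝ≥0∞)
    (x : X) (Q : Measure X) : ℝ≥0∞ :=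
  L x + ∫⁻ x', H x x' ∂Q

/-- `J(x,x̃) = L(x) + L(x̃) + H(x,x̃)`. -/
def Jcost {X : Type*} (L : X → ℝ≥0∞) (H : X → X → ℝ≥0∞) (x x' : X) : ℝ≥0∞ :=
  L x + L x' + H x x'

/-- The potential `𝓙(Q) = ∫∫ J d(Q ⊗ Q)`. -/
def Jpot {X : Type*} [MeasurableSpace X] (L : X → ℝ≥0∞) (H : X → X → ℝ≥0∞)
    (Q : Measure X) : ℝ≥0∞ :=
  ∫⁻ p : X × X, Jcost L H p.1 p.2 ∂(Q.prod Q)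

/-! ### Auxiliary material: a measurable section of a continuous surjection onto a
compact set, built by an iterative finite-net selection. -/

open Classical in
/-- Pick the first element `x` of a list such that `y ∈ p x`; default value `d`. -/
private noncomputable def pickList {X Y : Type*} (p : X → Set Y) (d : X) :
    List X → Y → X
  | [], _ => d
  | x :: xs, y => if y ∈ p x then x else pickList p d xs y

private lemma pickList_measurable {X Y : Type*} [MeasurableSpace X] [MeasurableSpace Y]
    (p : X → Set Y) (d : X) (l : List X) (hp : ∀ x ∈ l, MeasurableSet (p x)) :
    Measurable (pickList p d l) := by
  induction l with
  | nil => exact measurable_const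
  | cons x xs ih =>
    have hx : MeasurableSet (p x) := hp x List.mem_cons_self
    have hxs : Measurable (pickList p d xs) := ih fun z hz => hp z (List.mem_cons_of_mem x hz)
    classical
    show Measurable (fun y => if y ∈ p x then x else pickList p d xs y)
    exact Measurable.ite hx measurable_const hxs

private lemma pickList_spec {X Y : Type*} (p : X → Set Y) (d : X) (l : List X) (y : Y)
    (h : ∃ x ∈ l, y ∈ p x) : y ∈ p (pickList p d l y) := by
  induction l with
  | nil => rcases h with ⟨x, hx, _⟩; exact absurd hx List.not_mem_nil
  | cons x xs ih =>
    by_cases hy : y ∈ p x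
    · simp [pickList, hy]
    · rcases h with ⟨z, hz, hyz⟩
      rcases List.mem_cons.1 hz with rfl | hz'
      · exact absurd hyz hy
      · simpa [pickList, hy] using ih ⟨z, hz', hyz⟩

/-- One refinement step for the construction of a measurable section. -/
private lemma sectionStep {X Y : Type*} [MetricSpace X] [TopologicalSpace Y] [T2Space Y]
    [MeasurableSpace X] [OpensMeasurableSpace X] [MeasurableSpace Y] [OpensMeasurableSpace Y]
    {K : Set X} (hK : IsCompact K) {π : X → Y} (hπ : Continuous π) (x₀ : X)
    {f : Y → X} (hf : Measurable f) {ε ε' : ℝ} (hε' : 0 < ε')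
    (hinv : ∀ y, ∃ z ∈ K, π z = y ∧ dist (f y) z ≤ ε) :
    ∃ g : Y → X, Measurable g ∧ (∀ y, ∃ z ∈ K, π z = y ∧ dist (g y) z ≤ ε') ∧
      ∀ y, dist (g y) (f y) ≤ ε' + ε := by
  obtain ⟨t, htfin, htcov⟩ := (Metric.totallyBounded_iff.1 hK.totallyBounded) ε' hε'
  set p : X → Set Y := fun x =>
    π '' (K ∩ Metric.closedBall x ε') ∩ f ⁻¹' Metric.closedBall x (ε' + ε) with hp
  have hpmeas : ∀ x, MeasurableSet (p x) := by
    intro x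
    have h1 : IsCompact (π '' (K ∩ Metric.closedBall x ε')) :=
      (hK.inter_right Metric.isClosed_closedBall).image hπ
    exact (h1.isClosed.measurableSet).inter (hf measurableSet_closedBall)
  set l : List X := htfin.toFinset.toList with hl
  have hmeml : ∀ x, x ∈ l ↔ x ∈ t := by
    intro x; rw [hl, Finset.mem_toList, Set.Finite.mem_toFinset]
  have hex : ∀ y, ∃ x ∈ l, y ∈ p x := by
    intro y
    obtain ⟨z, hzK, hzπ, hzd⟩ := hinv y
    have hz' := htcov hzK
    simp only [Set.mem_iUnion] at hz'
    obtain ⟨x, hxt, hzx⟩ := hz'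
    refine ⟨x, (hmeml x).2 hxt, ?_, ?_⟩
    · exact ⟨z, ⟨hzK, Metric.mem_closedBall.2 (le_of_lt (Metric.mem_ball.1 hzx))⟩, hzπ⟩
    · refine Metric.mem_closedBall.2 ?_
      calc dist (f y) x ≤ dist (f y) z + dist z x := dist_triangle _ _ _
        _ ≤ ε + ε' := add_le_add hzd (le_of_lt (Metric.mem_ball.1 hzx))
        _ = ε' + ε := add_comm _ _
  refine ⟨pickList p x₀ l, pickList_measurable p x₀ l fun x _ => hpmeas x, ?_, ?_⟩
  · intro y
    obtain ⟨⟨z, ⟨hzK, hzb⟩, hzπ⟩, -⟩ := pickList_spec p x₀ l y (hex y)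
    exact ⟨z, hzK, hzπ, by simpa [dist_comm] using Metric.mem_closedBall.1 hzb⟩
  · intro y
    obtain ⟨-, hfb⟩ := pickList_spec p x₀ l y (hex y)
    simpa [dist_comm] using Metric.mem_closedBall.1 hfb

/-- Dependent-choice style recursion producing a sequence with step relations. -/
private lemma exists_seq_step {α : Type*} {P : ℕ → α → Prop} {R : ℕ → α → α → Prop}
    (h0 : ∃ a, P 0 a) (hstep : ∀ n a, P n a → ∃ b, P (n + 1) b ∧ R n a b) :
    ∃ u : ℕ → α, (∀ n, P n (u n)) ∧ ∀ n, R n (u n) (u (n + 1)) := by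
  choose f hfP hfR using hstep
  obtain ⟨a0, ha0⟩ := h0
  let u : ∀ n : ℕ, { a : α // P n a } := fun n =>
    Nat.rec ⟨a0, ha0⟩ (fun n p => ⟨f n p.1 p.2, hfP n p.1 p.2⟩) n
  exact ⟨fun n => (u n).1, fun n => (u n).2, fun n => hfR n (u n).1 (u n).2⟩

/-- A continuous map which is surjective "through" a compact set admits a measurable
section with values in that compact set. -/
private lemma exists_measurable_section {X Y : Type*} [MetricSpace X] [CompleteSpace X]
    [TopologicalSpace Y] [T2Space Y] [MeasurableSpace X] [BorelSpace X]
    [MeasurableSpace Y] [OpensMeasurableSpace Y]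
    {K : Set X} (hK : IsCompact K) {π : X → Y} (hπ : Continuous π)
    (hsurj : ∀ y : Y, ∃ x ∈ K, π x = y) (x₀ : X) (hx₀ : x₀ ∈ K) :
    ∃ s : Y → X, Measurable s ∧ ∀ y, s y ∈ K ∧ π (s y) = y := by
  obtain ⟨R, hR⟩ := hK.isBounded.subset_closedBall x₀
  set δ : ℝ := max R 1 with hδ
  have hδpos : 0 < δ := lt_of_lt_of_le one_pos (le_max_right _ _)
  set ε : ℕ → ℝ := fun n => δ * (1 / 2 : ℝ) ^ n with hε
  have hεpos : ∀ n, 0 < ε n := fun n => mul_pos hδpos (by positivity)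
  -- the sequence of approximate sections
  have hseq : ∃ u : ℕ → Y → X,
      (∀ n, Measurable (u n) ∧ ∀ y, ∃ z ∈ K, π z = y ∧ dist (u n y) z ≤ ε n) ∧
      ∀ n, ∀ y, dist (u (n + 1) y) (u n y) ≤ ε (n + 1) + ε n := by
    refine exists_seq_step (P := fun n f => Measurable f ∧
        ∀ y, ∃ z ∈ K, π z = y ∧ dist (f y) z ≤ ε n)
      (R := fun n f g => ∀ y, dist (g y) (f y) ≤ ε (n + 1) + ε n) ?_ ?_
    · refine ⟨fun _ => x₀, measurable_const, fun y => ?_⟩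
      obtain ⟨z, hzK, hzπ⟩ := hsurj y
      refine ⟨z, hzK, hzπ, ?_⟩
      have : dist z x₀ ≤ R := Metric.mem_closedBall.1 (hR hzK)
      have hRδ : R ≤ δ := le_max_left _ _
      calc dist x₀ z = dist z x₀ := dist_comm _ _
        _ ≤ R := this
        _ ≤ δ := hRδ
        _ = ε 0 := by simp [hε]
    · rintro n f ⟨hfm, hfinv⟩
      obtain ⟨g, hgm, hginv, hgd⟩ := sectionStep hK hπ x₀ hfm (hεpos (n + 1)) hfinv
      exact ⟨g, ⟨hgm, hginv⟩, hgd⟩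
  obtain ⟨u, hP, hchain⟩ := hseq
  -- Cauchy and limit
  have hcauchy : ∀ y, CauchySeq fun n => u n y := by
    intro y
    refine cauchySeq_of_le_geometric (1 / 2 : ℝ) (2 * δ) (by norm_num) fun n => ?_
    have h := hchain n y
    have : ε (n + 1) + ε n ≤ 2 * δ * (1 / 2 : ℝ) ^ n := by
      simp only [hε, pow_succ]
      nlinarith [pow_pos (by norm_num : (0:ℝ) < 1 / 2) n, hδpos]
    calc dist (u n y) (u (n + 1) y) = dist (u (n + 1) y) (u n y) := dist_comm _ _
      _ ≤ ε (n + 1) + ε n := h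
      _ ≤ 2 * δ * (1 / 2 : ℝ) ^ n := this
  have hlim : ∀ y, ∃ x : X, Tendsto (fun n => u n y) atTop (𝓝 x) := fun y =>
    cauchySeq_tendsto_of_complete (hcauchy y)
  choose s hs using hlim
  have hεlim : Tendsto ε atTop (𝓝 0) := by
    have : Tendsto (fun n : ℕ => (1 / 2 : ℝ) ^ n) atTop (𝓝 0) :=
      tendsto_pow_atTop_nhds_zero_of_lt_one (by norm_num) (by norm_num)
    simpa [hε] using this.const_mul δ
  refine ⟨s, ?_, ?_⟩
  · exact measurable_of_tendsto_metrizable' atTop (fun n => (hP n).1)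
      (tendsto_pi_nhds.2 hs)
  · intro y
    choose z hzK hzπ hzd using fun n => (hP n).2 y
    have hzt : Tendsto z atTop (𝓝 (s y)) := by
      rw [tendsto_iff_dist_tendsto_zero]
      have hb : ∀ n, dist (z n) (s y) ≤ ε n + dist (u n y) (s y) := by
        intro n
        calc dist (z n) (s y) ≤ dist (z n) (u n y) + dist (u n y) (s y) := dist_triangle _ _ _
          _ ≤ ε n + dist (u n y) (s y) := by
              have := hzd n
              rw [dist_comm] at this
              exact add_le_add_left this _
      have h2 : Tendsto (fun n => ε n + dist (u n y) (s y)) atTop (𝓝 0) := by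
        have := (tendsto_iff_dist_tendsto_zero.1 (hs y))
        simpa using hεlim.add this
      exact squeeze_zero (fun n => dist_nonneg) hb h2
    constructor
    · exact hK.isClosed.mem_of_tendsto hzt (Eventually.of_forall hzK)
    · have h1 : Tendsto (fun n => π (z n)) atTop (𝓝 (π (s y))) :=
        (hπ.tendsto _).comp hzt
      have h2 : Tendsto (fun n => π (z n)) atTop (𝓝 y) := by
        simpa [hzπ] using tendsto_const_nhds (x := y) (f := (atTop : Filter ℕ))
      exact tendsto_nhds_unique h1 h2

/-! ### Integral bounds for `Jpot` -/

/-- Upper bound for the `J`-integral against a product of probability measures. -/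
private lemma jpot_prod_le {X : Type*} [MeasurableSpace X]
    {L : X → ℝ≥0∞} (hL : Measurable L) {H : X → X → ℝ≥0∞}
    {C : ℝ≥0∞} (hC : ∀ x x', H x x' ≤ C * (L x + L x' + 1))
    (μ ν : Measure X) [SFinite μ] [IsProbabilityMeasure μ] [IsProbabilityMeasure ν] :
    ∫⁻ p : X × X, Jcost L H p.1 p.2 ∂(μ.prod ν) ≤
      (1 + C) * (∫⁻ x, L x ∂μ + ∫⁻ x, L x ∂ν + 1) := by
  have hpt : ∀ p : X × X, Jcost L H p.1 p.2 ≤ (1 + C) * (L p.1 + L p.2 + 1) := by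
    intro p
    have h1 : L p.1 + L p.2 ≤ L p.1 + L p.2 + 1 := le_self_add
    calc Jcost L H p.1 p.2 = (L p.1 + L p.2) + H p.1 p.2 := rfl
      _ ≤ (L p.1 + L p.2 + 1) + C * (L p.1 + L p.2 + 1) := add_le_add h1 (hC _ _)
      _ = (1 + C) * (L p.1 + L p.2 + 1) := by ring
  calc ∫⁻ p : X × X, Jcost L H p.1 p.2 ∂(μ.prod ν)
      ≤ ∫⁻ p : X × X, (1 + C) * (L p.1 + L p.2 + 1) ∂(μ.prod ν) := lintegral_mono hpt
    _ = (1 + C) * ∫⁻ p : X × X, (L p.1 + L p.2 + 1) ∂(μ.prod ν) := by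
        exact lintegral_const_mul _ (((hL.comp measurable_fst).add
          (hL.comp measurable_snd)).add measurable_const)
    _ = (1 + C) * (∫⁻ x, L x ∂μ + ∫⁻ x, L x ∂ν + 1) := by
        congr 1
        have hm : Measurable fun p : X × X => L p.1 + L p.2 + 1 :=
          ((hL.comp measurable_fst).add (hL.comp measurable_snd)).add measurable_const
        rw [lintegral_prod (fun p : X × X => L p.1 + L p.2 + 1) hm.aemeasurable]
        have : ∀ x, ∫⁻ x', (L x + L x' + 1) ∂ν = L x + ∫⁻ x', L x' ∂ν + 1 := by
          intro x
          rw [lintegral_add_right _ measurable_const, lintegral_add_left measurable_const]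
          simp [measure_univ]
        simp only [this]
        rw [lintegral_add_right _ measurable_const,
          lintegral_add_left hL]
        simp [measure_univ]

/-- Lower bound: the `L`-integral is dominated by `Jpot`. -/
private lemma lintegral_L_le_jpot {X : Type*} [MeasurableSpace X]
    {L : X → ℝ≥0∞} (hL : Measurable L) (H : X → X → ℝ≥0∞)
    (Q : Measure X) [SFinite Q] [IsProbabilityMeasure Q] :
    ∫⁻ x, L x ∂Q ≤ Jpot L H Q := by
  have h1 : ∫⁻ p : X × X, L p.1 ∂(Q.prod Q) = ∫⁻ x, L x ∂Q := by
    have hm : Measurable fun p : X × X => L p.1 := hL.comp measurable_fst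
    rw [lintegral_prod (fun p : X × X => L p.1) hm.aemeasurable]
    simp [measure_univ]
  calc ∫⁻ x, L x ∂Q = ∫⁻ p : X × X, L p.1 ∂(Q.prod Q) := h1.symm
    _ ≤ ∫⁻ p : X × X, Jcost L H p.1 p.2 ∂(Q.prod Q) :=
        lintegral_mono fun p => le_trans le_self_add le_self_add
    _ = Jpot L H Q := rfl

/-- Corollary `coro:dom-J-convex`: under (A6), (A7), (A8), for every probability measure `m₀`
on `Y`, the set `dom 𝓙 ∩ 𝓟_{m₀}(X)` is nonempty and convex. -/
theorem domJ_inter_Pm0_nonempty_convex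
    {X Y : Type*}
    [TopologicalSpace X] [PolishSpace X] [MeasurableSpace X] [BorelSpace X]
    [TopologicalSpace Y] [PolishSpace Y] [MeasurableSpace Y] [BorelSpace Y]
    (π : X → Y) (hπ : Continuous π)
    (L : X → ℝ≥0∞) (hL : LowerSemicontinuous L)
    (H : X → X → ℝ≥0∞) (hH : Measurable (Function.uncurry H))
    (κ : ℝ) (hκpos : 0 < κ)
    (hA6 : ∀ y : Y, ∃ x : X, π x = y ∧ L x ≤ ENNReal.ofReal κ)
    (hA7 : ∀ c : ℝ, 0 < c → IsCompact {x : X | L x ≤ ENNReal.ofReal c})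
    (C : ℝ) (hCpos : 0 < C)
    (hA8 : ∀ x x' : X, H x x' ≤ ENNReal.ofReal C * (L x + L x' + 1))
    (m₀ : Measure Y) [IsProbabilityMeasure m₀] :
    (∃ Q : Measure X, IsProbabilityMeasure Q ∧ Q.map π = m₀ ∧ Jpot L H Q ≠ ⊤) ∧
    (∀ Q Q' : Measure X,
      (IsProbabilityMeasure Q ∧ Q.map π = m₀ ∧ Jpot L H Q ≠ ⊤) →
      (IsProbabilityMeasure Q' ∧ Q'.map π = m₀ ∧ Jpot L H Q' ≠ ⊤) →
      ∀ a b : ℝ≥0∞, a + b = 1 →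
        IsProbabilityMeasure (a • Q + b • Q') ∧ (a • Q + b • Q').map π = m₀ ∧
          Jpot L H (a • Q + b • Q') ≠ ⊤) := by
  have hLm : Measurable L := hL.measurable
  have hC'top : ENNReal.ofReal C ≠ ⊤ := ENNReal.ofReal_ne_top
  have hfac : (1 + ENNReal.ofReal C) ≠ ⊤ :=
    ENNReal.add_ne_top.2 ⟨ENNReal.one_ne_top, ENNReal.ofReal_ne_top⟩
  constructor
  · -- Nonemptiness
    have hYne : Nonempty Y := by
      by_contra h
      have h0 : (Set.univ : Set Y) = ∅ := by
        simp [Set.eq_empty_iff_forall_notMem]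
        exact fun y => (h ⟨y⟩)
      have h1 : m₀ Set.univ = 1 := measure_univ
      rw [h0, measure_empty] at h1
      exact zero_ne_one h1
    obtain ⟨y₀⟩ := hYne
    obtain ⟨x₀, _, hx₀L⟩ := hA6 y₀
    letI := TopologicalSpace.upgradeIsCompletelyMetrizable X
    set K : Set X := {x : X | L x ≤ ENNReal.ofReal κ} with hKdef
    have hKc : IsCompact K := hA7 κ hκpos
    have hsurj : ∀ y : Y, ∃ x ∈ K, π x = y := by
      intro y; obtain ⟨x, hxy, hxL⟩ := hA6 y; exact ⟨x, hxL, hxy⟩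
    obtain ⟨s, hsm, hsec⟩ := exists_measurable_section hKc hπ hsurj x₀ hx₀L
    set Q : Measure X := m₀.map s with hQdef
    haveI hQp : IsProbabilityMeasure Q := Measure.isProbabilityMeasure_map hsm.aemeasurable
    have hmap : Q.map π = m₀ := by
      rw [hQdef, Measure.map_map hπ.measurable hsm]
      have : π ∘ s = id := funext fun y => (hsec y).2
      rw [this, Measure.map_id]
    have hLQ : ∫⁻ x, L x ∂Q ≤ ENNReal.ofReal κ := by
      rw [hQdef, lintegral_map hLm hsm]
      calc ∫⁻ y, L (s y) ∂m₀ ≤ ∫⁻ _, ENNReal.ofReal κ ∂m₀ :=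
            lintegral_mono fun y => (hsec y).1
        _ = ENNReal.ofReal κ := by simp [measure_univ]
    refine ⟨Q, hQp, hmap, ?_⟩
    have hbound := jpot_prod_le hLm hA8 Q Q
    have hfin : (1 + ENNReal.ofReal C) *
        (∫⁻ x, L x ∂Q + ∫⁻ x, L x ∂Q + 1) ≠ ⊤ := by
      apply ENNReal.mul_ne_top hfac
      have hk : ∫⁻ x, L x ∂Q ≠ ⊤ :=
        ne_top_of_le_ne_top ENNReal.ofReal_ne_top hLQ
      simp [ENNReal.add_ne_top, hk]
    exact ne_top_of_le_ne_top hfin hbound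
  · -- Convexity
    rintro Q Q' ⟨hQp, hQm, hQJ⟩ ⟨hQ'p, hQ'm, hQ'J⟩ a b hab
    haveI := hQp
    haveI := hQ'p
    have ha1 : a ≤ 1 := by rw [← hab]; exact le_self_add
    have hb1 : b ≤ 1 := by rw [← hab]; exact le_add_self
    have hat : a ≠ ⊤ := ne_top_of_le_ne_top ENNReal.one_ne_top ha1
    have hbt : b ≠ ⊤ := ne_top_of_le_ne_top ENNReal.one_ne_top hb1
    have hmixp : IsProbabilityMeasure (a • Q + b • Q') := by
      constructor
      simp only [Measure.add_apply, Measure.smul_apply, smul_eq_mul, measure_univ,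
        mul_one]
      exact hab
    refine ⟨hmixp, ?_, ?_⟩
    · rw [Measure.map_add _ _ hπ.measurable, Measure.map_smul, Measure.map_smul,
        hQm, hQ'm, ← add_smul, hab, one_smul]
    · haveI := hmixp
      have hLQ : ∫⁻ x, L x ∂Q ≠ ⊤ :=
        ne_top_of_le_ne_top hQJ (lintegral_L_le_jpot hLm H Q)
      have hLQ' : ∫⁻ x, L x ∂Q' ≠ ⊤ :=
        ne_top_of_le_ne_top hQ'J (lintegral_L_le_jpot hLm H Q')
      have hLmix : ∫⁻ x, L x ∂(a • Q + b • Q') ≠ ⊤ := by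
        rw [lintegral_add_measure, lintegral_smul_measure, lintegral_smul_measure]
        exact ENNReal.add_ne_top.2 ⟨ENNReal.mul_ne_top hat hLQ, ENNReal.mul_ne_top hbt hLQ'⟩
      have hbound := jpot_prod_le hLm hA8 (a • Q + b • Q') (a • Q + b • Q')
      have hfin : (1 + ENNReal.ofReal C) *
          (∫⁻ x, L x ∂(a • Q + b • Q') + ∫⁻ x, L x ∂(a • Q + b • Q') + 1) ≠ ⊤ := by
        exact ENNReal.mul_ne_top hfac
          (ENNReal.add_ne_top.2 ⟨ENNReal.add_ne_top.2 ⟨hLmix, hLmix⟩, ENNReal.one_ne_top⟩)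
      exact ne_top_of_le_ne_top hfin hbound
end
end

section
/- Assume (A5): the function J(x,x̃) = L(x) + L(x̃) + H(x,x̃) is lower semicontinuous on X × X. Then for every Q ∈ 𝓟(X) with 𝓛(Q) = ∫_X L dQ < +∞, the function x ↦ F(x,Q) = L(x) + ∫_X H(x,x̃) dQ(x̃) is lower semicontinuous on X. -/
open MeasureTheory Filter Topology Set
open scoped ENNReal

noncomputable section

/-- Lemma `lemm:F-lsc`: under (A5), for every `Q` with `𝓛(Q) = ∫ L dQ < +∞`, the function
`x ↦ F(x,Q)` is lower semicontinuous. -/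
theorem lowerSemicontinuous_Fcost
    {X : Type*}
    [TopologicalSpace X] [PolishSpace X] [MeasurableSpace X] [BorelSpace X]
    (L : X → ℝ≥0∞) (hL : LowerSemicontinuous L)
    (H : X → X → ℝ≥0∞) (hH : Measurable (Function.uncurry H))
    (hA5 : LowerSemicontinuous fun p : X × X => Jcost L H p.1 p.2)
    (Q : Measure X) [IsProbabilityMeasure Q] (hQ : (∫⁻ x, L x ∂Q) ≠ ⊤) :
    LowerSemicontinuous fun x : X => Fcost L H x Q := by
  set c : ℝ≥0∞ := ∫⁻ x, L x ∂Q with hc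
  set G : X → ℝ≥0∞ := fun x => ∫⁻ x', Jcost L H x x' ∂Q with hG
  have hLmeas : Measurable L := hL.measurable
  have hHx : ∀ x : X, Measurable fun x' => H x x' := fun x =>
    hH.comp (measurable_prodMk_left)
  have hGeq : ∀ x : X, G x = Fcost L H x Q + c := by
    intro x
    have : G x = ∫⁻ x', (L x + L x') + H x x' ∂Q := rfl
    rw [this, lintegral_add_right _ (hHx x), lintegral_add_left (measurable_const)]
    rw [lintegral_const, measure_univ, mul_one]
    unfold Fcost
    ring
  -- G is lower semicontinuous
  have hGlsc : LowerSemicontinuous G := by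
    intro x y hy
    by_contra hcon
    have hfreq : ∃ᶠ x' in 𝓝 x, ¬ y < G x' := Filter.not_eventually.mp hcon
    obtain ⟨u, hu, hup⟩ := Filter.exists_seq_forall_of_frequently hfreq
    have key : G x ≤ Filter.liminf (fun n => G (u n)) Filter.atTop := by
      have step1 : ∀ x' : X, Jcost L H x x' ≤
          Filter.liminf (fun n => Jcost L H (u n) x') Filter.atTop := by
        intro x'
        rw [Filter.le_liminf_iff]
        intro b hb
        have hpair : Filter.Tendsto (fun n => ((u n), x')) Filter.atTop (𝓝 (x, x')) :=
          hu.prodMk_nhds tendsto_const_nhds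
        exact hpair.eventually (hA5 (x, x') b hb)
      calc G x ≤ ∫⁻ x', Filter.liminf (fun n => Jcost L H (u n) x') Filter.atTop ∂Q :=
            lintegral_mono step1
        _ ≤ Filter.liminf (fun n => G (u n)) Filter.atTop := by
            apply lintegral_liminf_le
            intro n
            exact ((hLmeas.comp measurable_const).add hLmeas).add (hHx (u n))
    have hle : Filter.liminf (fun n => G (u n)) Filter.atTop ≤ y := by
      apply Filter.liminf_le_of_frequently_le
      · exact Filter.Frequently.of_forall fun n => not_lt.mp (hup n)
      · exact ⟨⊥, Filter.eventually_map.mpr (Filter.Eventually.of_forall fun _ => bot_le)⟩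
    exact absurd (lt_of_lt_of_le hy (key.trans hle)) (lt_irrefl y)
  -- Fcost = G - c
  have hFeq : (fun x : X => Fcost L H x Q) = (fun t => t - c) ∘ G := by
    funext x
    simp only [Function.comp, hGeq x, ENNReal.add_sub_cancel_right hQ]
  rw [hFeq]
  exact (ENNReal.continuous_sub_right c).comp_lowerSemicontinuous hGlsc
    (fun a b hab => tsub_le_tsub_right hab c)
end
end

section
/- Assume (A5), (A6), (A7), and (A8). Then for every Q ∈ 𝓟(X) with 𝓛(Q) < +∞ and every y ∈ Y, there exists x ∈ X with π(x) = y such that F(x,Q) = inf{F(z,Q) : z ∈ X, π(z) = y}. -/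
open MeasureTheory Filter Topology Set
open scoped ENNReal

noncomputable section

/-- If `f` is lower semicontinuous at `p` and `u → p`, then `f p ≤ liminf (f ∘ u)`. -/
lemma lsc_le_liminf_seq {Z : Type*} [TopologicalSpace Z] {f : Z → ℝ≥0∞} {p : Z}
    (hf : LowerSemicontinuousAt f p) {u : ℕ → Z} (hu : Tendsto u atTop (𝓝 p)) :
    f p ≤ Filter.liminf (fun n => f (u n)) atTop := by
  have h1 : f p ≤ Filter.liminf f (𝓝 p) := hf.le_liminf
  have h2 : Filter.liminf f (𝓝 p) ≤ Filter.liminf f (Filter.map u atTop) :=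
    Filter.liminf_le_liminf_of_le hu (by isBoundedDefault) (by isBoundedDefault)
  calc f p ≤ Filter.liminf f (Filter.map u atTop) := h1.trans h2
    _ = Filter.liminf (fun n => f (u n)) atTop := (Filter.liminf_comp f u atTop).symm

set_option maxHeartbeats 1000000 in
/-- Corollary `coro:exist-optimal-FxQ`: under (A5), (A6), (A7), (A8), for every `Q` with
`𝓛(Q) < +∞` and every `y ∈ Y`, the problem `Min(y,Q)` admits a solution. -/
theorem exists_optimal_Fcost
    {X Y : Type*}
    [TopologicalSpace X] [PolishSpace X] [MeasurableSpace X] [BorelSpace X]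
    [TopologicalSpace Y] [PolishSpace Y] [MeasurableSpace Y] [BorelSpace Y]
    (π : X → Y) (hπ : Continuous π)
    (L : X → ℝ≥0∞) (hL : LowerSemicontinuous L)
    (H : X → X → ℝ≥0∞) (hH : Measurable (Function.uncurry H))
    (hA5 : LowerSemicontinuous fun p : X × X => Jcost L H p.1 p.2)
    (κ : ℝ) (hκpos : 0 < κ)
    (hA6 : ∀ y : Y, ∃ x : X, π x = y ∧ L x ≤ ENNReal.ofReal κ)
    (hA7 : ∀ c : ℝ, 0 < c → IsCompact {x : X | L x ≤ ENNReal.ofReal c})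
    (C : ℝ) (hCpos : 0 < C)
    (hA8 : ∀ x x' : X, H x x' ≤ ENNReal.ofReal C * (L x + L x' + 1))
    (Q : Measure X) [IsProbabilityMeasure Q] (hQ : (∫⁻ x, L x ∂Q) ≠ ⊤)
    (y : Y) :
    ∃ x : X, π x = y ∧
      Fcost L H x Q = ⨅ (z : X) (_ : π z = y), Fcost L H z Q := by
  have hLmeas : Measurable L := hL.measurable
  set c : ℝ≥0∞ := ∫⁻ x, L x ∂Q with hc
  have hHz : ∀ z : X, Measurable (fun x' => H z x') := fun z =>
    hH.comp (measurable_prodMk_left)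
  -- key identity: ∫ J(z,·) dQ = F(z,Q) + c
  have hJint : ∀ z : X, (∫⁻ x', Jcost L H z x' ∂Q) = Fcost L H z Q + c := by
    intro z
    have : (∫⁻ x', Jcost L H z x' ∂Q)
        = (∫⁻ x', (L z + L x') ∂Q) + ∫⁻ x', H z x' ∂Q := by
      simp only [Jcost]
      exact lintegral_add_right _ (hHz z)
    rw [this, lintegral_add_left measurable_const, lintegral_const,
      measure_univ, mul_one]
    simp only [Fcost, ← hc]
    ring
  -- the base point in the fiber
  obtain ⟨x₀, hx₀y, hx₀L⟩ := hA6 y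
  have hx₀Lne : L x₀ ≠ ⊤ := (hx₀L.trans_lt ENNReal.ofReal_lt_top).ne
  -- F(x₀,Q) is finite
  have hFx₀ : Fcost L H x₀ Q ≠ ⊤ := by
    have hint : (∫⁻ x', H x₀ x' ∂Q) ≤ ENNReal.ofReal C * (L x₀ + c + 1) := by
      calc (∫⁻ x', H x₀ x' ∂Q)
          ≤ ∫⁻ x', ENNReal.ofReal C * (L x₀ + L x' + 1) ∂Q :=
            lintegral_mono fun x' => hA8 x₀ x'
        _ = ENNReal.ofReal C * ∫⁻ x', (L x₀ + L x' + 1) ∂Q :=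
            lintegral_const_mul _ (by fun_prop)
        _ = ENNReal.ofReal C * (L x₀ + c + 1) := by
            rw [lintegral_add_right _ measurable_const,
              lintegral_add_left measurable_const, lintegral_const, lintegral_const,
              measure_univ, mul_one, mul_one]
    have : Fcost L H x₀ Q ≤ L x₀ + ENNReal.ofReal C * (L x₀ + c + 1) :=
      add_le_add_right hint _
    refine (this.trans_lt ?_).ne
    exact ENNReal.add_lt_top.2 ⟨hx₀Lne.lt_top,
      ENNReal.mul_lt_top ENNReal.ofReal_lt_top
        (by exact ENNReal.add_lt_top.2 ⟨ENNReal.add_lt_top.2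
          ⟨hx₀Lne.lt_top, hQ.lt_top⟩, ENNReal.one_lt_top⟩)⟩
  set m : ℝ≥0∞ := ⨅ (z : X) (_ : π z = y), Fcost L H z Q with hm
  have hmle : m ≤ Fcost L H x₀ Q := by
    exact iInf_le_of_le x₀ (iInf_le _ hx₀y)
  have hmne : m ≠ ⊤ := (hmle.trans_lt hFx₀.lt_top).ne
  -- minimizing sequence
  have hseq : ∀ n : ℕ, ∃ z : X, π z = y ∧
      Fcost L H z Q < m + ((n : ℝ≥0∞) + 1)⁻¹ := by
    intro n
    have hlt : m < m + ((n : ℝ≥0∞) + 1)⁻¹ :=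
      ENNReal.lt_add_right hmne (by simp)
    obtain ⟨z, hz⟩ := iInf_lt_iff.mp (hm ▸ hlt : (⨅ (z : X) (_ : π z = y),
      Fcost L H z Q) < m + ((n : ℝ≥0∞) + 1)⁻¹)
    obtain ⟨hzy, hzlt⟩ := iInf_lt_iff.mp hz
    exact ⟨z, hzy, hzlt⟩
  choose z hzy hzlt using hseq
  have hzK : ∀ n, L (z n) ≤ Fcost L H x₀ Q + 1 := by
    intro n
    have h1 : L (z n) ≤ Fcost L H (z n) Q := le_add_right le_rfl
    have h2 : ((n : ℝ≥0∞) + 1)⁻¹ ≤ 1 := by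
      simp [ENNReal.inv_le_one]
    exact h1.trans ((hzlt n).le.trans (add_le_add hmle h2))
  -- the compact sublevel set
  set r : ℝ := (Fcost L H x₀ Q + 1).toReal with hr
  have hrtop : Fcost L H x₀ Q + 1 ≠ ⊤ := ENNReal.add_ne_top.2 ⟨hFx₀, ENNReal.one_ne_top⟩
  have hrofReal : ENNReal.ofReal r = Fcost L H x₀ Q + 1 := ENNReal.ofReal_toReal hrtop
  have hrpos : 0 < r := by
    rw [hr]
    apply ENNReal.toReal_pos _ hrtop
    simp
  have hK : IsCompact {x : X | L x ≤ ENNReal.ofReal r} := hA7 r hrpos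
  have hzmem : ∀ n, z n ∈ {x : X | L x ≤ ENNReal.ofReal r} := by
    intro n; rw [mem_setOf_eq, hrofReal]; exact hzK n
  obtain ⟨x, -, φ, hφ, hxtend⟩ := hK.tendsto_subseq hzmem
  -- x is in the fiber
  have hxy : π x = y := by
    have h1 : Tendsto (fun n => π (z (φ n))) atTop (𝓝 (π x)) :=
      (hπ.tendsto x).comp hxtend
    have h2 : (fun n => π (z (φ n))) = fun _ => y := funext fun n => hzy (φ n)
    rw [h2] at h1
    exact (tendsto_const_nhds_iff.mp h1).symm
  refine ⟨x, hxy, le_antisymm ?_ (iInf_le_of_le x (iInf_le _ hxy))⟩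
  -- F (z (φ n)) Q tends to m
  have hFz : Tendsto (fun n => Fcost L H (z (φ n)) Q) atTop (𝓝 m) := by
    have hup : Tendsto (fun n : ℕ => m + ((n : ℝ≥0∞) + 1)⁻¹) atTop (𝓝 m) := by
      have h0 : Tendsto (fun n : ℕ => ((n : ℝ≥0∞) + 1)⁻¹) atTop (𝓝 0) := by
        have h := ENNReal.tendsto_inv_nat_nhds_zero.comp
          (tendsto_add_atTop_nat 1)
        have heq : ((fun n : ℕ => ((n : ℝ≥0∞))⁻¹) ∘ fun a => a + 1)
            = fun n : ℕ => ((n : ℝ≥0∞) + 1)⁻¹ := by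
          funext n; simp [Function.comp, Nat.cast_add]
        rwa [heq] at h
      simpa using (tendsto_const_nhds.add h0 : Tendsto
        (fun n : ℕ => m + ((n : ℝ≥0∞) + 1)⁻¹) atTop (𝓝 (m + 0)))
    have hFz0 : Tendsto (fun n => Fcost L H (z n) Q) atTop (𝓝 m) :=
      tendsto_of_tendsto_of_tendsto_of_le_of_le tendsto_const_nhds hup
        (fun n => iInf_le_of_le (z n) (iInf_le _ (hzy n)))
        (fun n => (hzlt n).le)
    exact hFz0.comp hφ.tendsto_atTop
  -- Fatou + lower semicontinuity of J
  have hfatou : (∫⁻ x', Jcost L H x x' ∂Q)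
      ≤ Filter.liminf (fun n => ∫⁻ x', Jcost L H (z (φ n)) x' ∂Q) atTop := by
    have hmeasJ : ∀ n : ℕ, Measurable (fun x' => Jcost L H (z (φ n)) x') := by
      intro n
      simp only [Jcost]
      exact (measurable_const.add hLmeas).add (hHz _)
    have hpt : ∀ x', Jcost L H x x'
        ≤ Filter.liminf (fun n => Jcost L H (z (φ n)) x') atTop := by
      intro x'
      have htend : Tendsto (fun n => (z (φ n), x')) atTop (𝓝 (x, x')) :=
        hxtend.prodMk_nhds tendsto_const_nhds
      show (fun p : X × X => Jcost L H p.1 p.2) (x, x')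
          ≤ Filter.liminf
            (fun n => (fun p : X × X => Jcost L H p.1 p.2)
              ((fun n => (z (φ n), x')) n)) atTop
      exact lsc_le_liminf_seq (hA5 (x, x')) htend
    calc (∫⁻ x', Jcost L H x x' ∂Q)
        ≤ ∫⁻ x', Filter.liminf (fun n => Jcost L H (z (φ n)) x') atTop ∂Q :=
          lintegral_mono hpt
      _ ≤ Filter.liminf (fun n => ∫⁻ x', Jcost L H (z (φ n)) x' ∂Q) atTop :=
          lintegral_liminf_le hmeasJ
  -- conclude
  have hliminf : Filter.liminf (fun n => ∫⁻ x', Jcost L H (z (φ n)) x' ∂Q) atTop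
      = m + c := by
    have : Tendsto (fun n => ∫⁻ x', Jcost L H (z (φ n)) x' ∂Q) atTop (𝓝 (m + c)) := by
      simp only [hJint]
      exact hFz.add tendsto_const_nhds
    exact this.liminf_eq
  have hfinal : Fcost L H x Q + c ≤ m + c := by
    rw [← hJint x]
    exact hfatou.trans_eq hliminf
  exact (ENNReal.add_le_add_iff_right hQ).mp hfinal
end
end

section
/- Assume (A6) and (A7) and let Q₀ ∈ 𝓟(X) with 𝓙(Q₀) < +∞. Suppose G₁ and G₂ are Borel-measurable functions X → ℝ such that, for every Q ∈ 𝓟(X) with 𝓙(Q) < +∞, both G₁ and G₂ are integrable with respect to the signed measure Q − Q₀ and ∫_X G₁(x) d(Q − Q₀)(x) = ∫_X G₂(x) d(Q − Q₀)(x). Then there exists λ ∈ ℝ such that G₁(x) = G₂(x) + λ for Q₀-almost every x ∈ X. -/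
open MeasureTheory Filter Topology Set
open scoped ENNReal

noncomputable section

/-- Uniqueness of the derivative of `𝓙` up to an additive constant: if `G₁`, `G₂` are
Borel functions whose integrals against `Q - Q₀` coincide for every `Q ∈ dom 𝓙`, then
`G₁ = G₂ + λ` `Q₀`-almost everywhere, for some constant `λ`. -/
theorem deriv_unique_up_to_additive_constant
    {X Y : Type*}
    [TopologicalSpace X] [PolishSpace X] [MeasurableSpace X] [BorelSpace X]
    [TopologicalSpace Y] [PolishSpace Y] [MeasurableSpace Y] [BorelSpace Y]
    (π : X → Y) (hπ : Continuous π)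
    (L : X → ℝ≥0∞) (hL : LowerSemicontinuous L)
    (H : X → X → ℝ≥0∞) (hH : Measurable (Function.uncurry H))
    (κ : ℝ) (hκpos : 0 < κ)
    (hA6 : ∀ y : Y, ∃ x : X, π x = y ∧ L x ≤ ENNReal.ofReal κ)
    (hA7 : ∀ c : ℝ, 0 < c → IsCompact {x : X | L x ≤ ENNReal.ofReal c})
    (Q₀ : Measure X) [IsProbabilityMeasure Q₀] (hQ₀ : Jpot L H Q₀ ≠ ⊤)
    (G₁ G₂ : X → ℝ) (hG₁ : Measurable G₁) (hG₂ : Measurable G₂)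
    (hint : ∀ Q : Measure X, IsProbabilityMeasure Q → Jpot L H Q ≠ ⊤ →
      Integrable G₁ Q ∧ Integrable G₂ Q ∧
        (∫ x, G₁ x ∂Q) - (∫ x, G₁ x ∂Q₀) = (∫ x, G₂ x ∂Q) - (∫ x, G₂ x ∂Q₀)) :
    ∃ l : ℝ, ∀ᵐ x ∂Q₀, G₁ x = G₂ x + l := by
  -- integrability w.r.t. Q₀
  obtain ⟨hG₁int, hG₂int, -⟩ := hint Q₀ inferInstance hQ₀
  set l : ℝ := (∫ x, G₁ x ∂Q₀) - ∫ x, G₂ x ∂Q₀ with hl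
  have hJm : Measurable (fun p : X × X => Jcost L H p.1 p.2) := by
    have hLm : Measurable L := hL.measurable
    exact ((hLm.comp measurable_fst).add (hLm.comp measurable_snd)).add hH
  -- key: for every measurable A of positive measure, the conditional measure has finite Jpot
  have key : ∀ A : Set X, MeasurableSet A → Q₀ A ≠ 0 →
      (∫ x in A, G₁ x ∂Q₀) - (∫ x in A, G₂ x ∂Q₀) = l * (Q₀ A).toReal := by
    intro A hA hA0
    set c : ℝ≥0∞ := (Q₀ A)⁻¹ with hc
    have hAfin : Q₀ A ≠ ⊤ := measure_ne_top Q₀ A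
    have hcne : c ≠ ⊤ := ENNReal.inv_ne_top.mpr hA0
    set Q : Measure X := c • Q₀.restrict A with hQdef
    have hQprob : IsProbabilityMeasure Q := by
      constructor
      simp only [hQdef, Measure.smul_apply, Measure.restrict_apply_univ, smul_eq_mul]
      exact ENNReal.inv_mul_cancel hA0 hAfin
    have hle : Q ≤ c • Q₀ := by
      rw [Measure.le_iff']
      intro s
      simp only [Measure.smul_apply, smul_eq_mul]
      exact mul_le_mul_right (Measure.le_iff'.1 Measure.restrict_le_self s) _
    have hJQ : Jpot L H Q ≠ ⊤ := by
      have h1 : Jpot L H Q = ∫⁻ x, ∫⁻ y, Jcost L H x y ∂Q ∂Q :=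
        lintegral_prod _ hJm.aemeasurable
      have h2 : Jpot L H Q₀ = ∫⁻ x, ∫⁻ y, Jcost L H x y ∂Q₀ ∂Q₀ :=
        lintegral_prod _ hJm.aemeasurable
      have hbound : Jpot L H Q ≤ c * (c * Jpot L H Q₀) := by
        rw [h1, h2]
        calc ∫⁻ x, ∫⁻ y, Jcost L H x y ∂Q ∂Q
            ≤ ∫⁻ x, ∫⁻ y, Jcost L H x y ∂(c • Q₀) ∂(c • Q₀) := by
              refine le_trans (lintegral_mono fun x => lintegral_mono' hle le_rfl) ?_
              exact lintegral_mono' hle le_rfl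
          _ = c * (c * ∫⁻ x, ∫⁻ y, Jcost L H x y ∂Q₀ ∂Q₀) := by
              rw [lintegral_smul_measure]
              congr 1
              rw [← lintegral_const_mul' _ _ hcne]
              congr 1; ext x
              rw [lintegral_smul_measure, smul_eq_mul]
      intro htop
      rw [htop] at hbound
      exact (ENNReal.mul_ne_top hcne (ENNReal.mul_ne_top hcne hQ₀)) (top_le_iff.mp hbound)
    obtain ⟨-, -, heq⟩ := hint Q hQprob hJQ
    have hI : ∀ G : X → ℝ, ∫ x, G x ∂Q = (Q₀ A).toReal⁻¹ * ∫ x in A, G x ∂Q₀ := by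
      intro G
      rw [hQdef, integral_smul_measure, hc, ENNReal.toReal_inv, smul_eq_mul]
    rw [hI G₁, hI G₂] at heq
    have hAr : (Q₀ A).toReal ≠ 0 := by
      simp [ENNReal.toReal_eq_zero_iff, hA0, hAfin]
    have : (Q₀ A).toReal⁻¹ * ((∫ x in A, G₁ x ∂Q₀) - ∫ x in A, G₂ x ∂Q₀) = l := by
      rw [mul_sub]; linarith [heq]
    calc (∫ x in A, G₁ x ∂Q₀) - ∫ x in A, G₂ x ∂Q₀
        = (Q₀ A).toReal * ((Q₀ A).toReal⁻¹ *
            ((∫ x in A, G₁ x ∂Q₀) - ∫ x in A, G₂ x ∂Q₀)) := by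
          field_simp
      _ = l * (Q₀ A).toReal := by rw [this]; ring
  refine ⟨l, ?_⟩
  have := ae_eq_of_forall_setIntegral_eq_of_sigmaFinite (μ := Q₀)
    (f := G₁) (g := fun x => G₂ x + l)
    (fun s _ _ => hG₁int.integrableOn)
    (fun s _ _ => (hG₂int.add (integrable_const l)).integrableOn)
    (fun s hs _ => by
      have hconst : ∫ x in s, (G₂ x + l) ∂Q₀ = (∫ x in s, G₂ x ∂Q₀) + l * (Q₀ s).toReal := by
        rw [integral_add hG₂int.integrableOn (integrable_const l).integrableOn,
          setIntegral_const, smul_eq_mul, mul_comm]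
        rfl
      rw [hconst]
      by_cases h0 : Q₀ s = 0
      · rw [Measure.restrict_eq_zero.mpr h0]
        simp [h0]
      · have := key s hs h0
        linarith)
  exact this
end
end

section
/- Assume H is symmetric, (A5), (A6), (A7), and (A8), and let m₀ ∈ 𝓟(Y). Then Q₀ ∈ 𝓟_{m₀}(X) is an equilibrium (i.e., ∫_X F(x,Q₀) dQ₀(x) < +∞ and for Q₀-almost every x ∈ X, F(x,Q₀) = inf{F(z,Q₀) : z ∈ X, π(z) = π(x)}) if and only if 𝓙(Q₀) < +∞ and ∫_X F(x,Q₀) d(Q − Q₀)(x) ≥ 0 for every Q ∈ 𝓟_{m₀}(X) with 𝓙(Q) < +∞. -/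
open MeasureTheory Filter Topology Set
open scoped ENNReal

noncomputable section

section AuxSelection

open ProbabilityTheory

namespace EqSel

variable {X : Type*} {Y : Type*} [MetricSpace X]

/-- Index of the first closed ball of radius `(1/2)^m` centered at a point of the sequence `e`
meeting `S`. -/
noncomputable def selIdx (e : ℕ → X) (m : ℕ) (S : Set X) : ℕ :=
  sInf {i | (S ∩ Metric.closedBall (e i) ((1 / 2) ^ m)).Nonempty}

/-- Decreasing sequence of compact pieces of the fiber of `π` over `y` inside `K`. -/
noncomputable def selSet (π : X → Y) (K : Set X) (e : ℕ → X) : ℕ → Y → Set X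
  | 0, y => K ∩ π ⁻¹' {y}
  | m + 1, y => selSet π K e m y ∩
      Metric.closedBall (e (selIdx e m (selSet π K e m y))) ((1 / 2) ^ m)

/-- Intersection of the balls determined by an index history `v`. -/
def selB (e : ℕ → X) (m : ℕ) (v : ℕ → ℕ) : Set X :=
  ⋂ k ∈ Finset.range m, Metric.closedBall (e (v k)) ((1 / 2) ^ k)

lemma isClosed_selB (e : ℕ → X) (m : ℕ) (v : ℕ → ℕ) : IsClosed (selB e m v) :=
  isClosed_biInter fun _ _ => Metric.isClosed_closedBall

lemma selB_succ (e : ℕ → X) (m : ℕ) (v : ℕ → ℕ) :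
    selB e (m + 1) v = selB e m v ∩ Metric.closedBall (e (v m)) ((1 / 2) ^ m) := by
  simp only [selB, Finset.range_add_one, Finset.set_biInter_insert]
  rw [Set.inter_comm]

lemma selSet_eq (π : X → Y) (K : Set X) (e : ℕ → X) (m : ℕ) (v : ℕ → ℕ) (y : Y)
    (hv : ∀ k < m, selIdx e k (selSet π K e k y) = v k) :
    selSet π K e m y = (K ∩ selB e m v) ∩ π ⁻¹' {y} := by
  induction m with
  | zero => simp [selSet, selB]
  | succ m ih =>
    have h1 : selSet π K e m y = (K ∩ selB e m v) ∩ π ⁻¹' {y} :=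
      ih fun k hk => hv k (Nat.lt_succ_of_lt hk)
    have h2 : selIdx e m (selSet π K e m y) = v m := hv m (Nat.lt_succ_self m)
    show selSet π K e m y ∩ _ = _
    rw [h2, h1, selB_succ]
    ext x
    simp only [Set.mem_inter_iff, Set.mem_preimage, Set.mem_singleton_iff]
    tauto

end EqSel

namespace EqSel2
open EqSel

variable {X : Type*} {Y : Type*} [MetricSpace X] [TopologicalSpace Y]

lemma selSet_isCompact [T1Space Y] (π : X → Y) (hπ : Continuous π) {K : Set X}
    (hK : IsCompact K) (e : ℕ → X) (m : ℕ) (y : Y) : IsCompact (selSet π K e m y) := by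
  induction m with
  | zero => exact hK.inter_right (isClosed_singleton.preimage hπ)
  | succ m ih => exact ih.inter_right Metric.isClosed_closedBall

lemma selSet_nonempty (π : X → Y) (K : Set X) {e : ℕ → X} (he : DenseRange e)
    (m : ℕ) {y : Y} (hy : y ∈ π '' K) : (selSet π K e m y).Nonempty := by
  induction m with
  | zero => obtain ⟨x, hx, rfl⟩ := hy; exact ⟨x, hx, rfl⟩
  | succ m ih =>
    obtain ⟨x, hx⟩ := ih
    have hr : (0:ℝ) < (1 / 2) ^ m := by positivity
    obtain ⟨i, hi⟩ := he.exists_dist_lt x hr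
    have hne : {i | (selSet π K e m y ∩
        Metric.closedBall (e i) ((1 / 2) ^ m)).Nonempty}.Nonempty :=
      ⟨i, ⟨x, hx, Metric.mem_closedBall.2 hi.le⟩⟩
    show (selSet π K e m y ∩
      Metric.closedBall (e (selIdx e m (selSet π K e m y))) ((1 / 2) ^ m)).Nonempty
    exact Nat.sInf_mem hne

variable [T2Space Y] [MeasurableSpace Y] [OpensMeasurableSpace Y]

lemma measurableSet_cyl (π : X → Y) (hπ : Continuous π) {K : Set X} (hK : IsCompact K)
    (e : ℕ → X) :
    ∀ (m : ℕ) (v : ℕ → ℕ), MeasurableSet {y | ∀ k < m, selIdx e k (selSet π K e k y) = v k} := by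
  intro m
  induction m with
  | zero => intro v; simp
  | succ m ih =>
    intro v
    set N : ℕ → Set Y := fun i =>
      π '' (K ∩ (selB e m v ∩ Metric.closedBall (e i) ((1 / 2) ^ m))) with hN
    have hNmeas : ∀ i, MeasurableSet (N i) := fun i =>
      ((hK.inter_right ((isClosed_selB e m v).inter
        Metric.isClosed_closedBall)).image hπ).isClosed.measurableSet
    have hTset : ∀ y, (∀ k < m, selIdx e k (selSet π K e k y) = v k) →
        {i | (selSet π K e m y ∩ Metric.closedBall (e i) ((1 / 2) ^ m)).Nonempty}
          = {i | y ∈ N i} := by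
      intro y hy
      ext i
      rw [Set.mem_setOf_eq, Set.mem_setOf_eq, selSet_eq π K e m v y hy, hN]
      constructor
      · rintro ⟨x, ⟨⟨hxK, hxB⟩, hxy⟩, hxC⟩
        exact ⟨x, ⟨hxK, hxB, hxC⟩, hxy⟩
      · rintro ⟨x, ⟨hxK, hxB, hxC⟩, hxy⟩
        exact ⟨x, ⟨⟨hxK, hxB⟩, hxy⟩, hxC⟩
    have hsplit : {y | ∀ k < m + 1, selIdx e k (selSet π K e k y) = v k}
        = {y | ∀ k < m, selIdx e k (selSet π K e k y) = v k} ∩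
          ((N (v m) \ ⋃ i ∈ Finset.range (v m), N i) ∪
            ((⋂ i, (N i)ᶜ) ∩ {_y : Y | v m = 0})) := by
      ext y
      simp only [Set.mem_setOf_eq, Set.mem_inter_iff, Set.mem_union, Set.mem_diff,
        Set.mem_iUnion, Set.mem_iInter, Set.mem_compl_iff, Finset.mem_range, not_exists]
      constructor
      · intro h
        have hy : ∀ k < m, selIdx e k (selSet π K e k y) = v k :=
          fun k hk => h k (Nat.lt_succ_of_lt hk)
        refine ⟨hy, ?_⟩
        have hm : selIdx e m (selSet π K e m y) = v m := h m (Nat.lt_succ_self m)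
        have hIdef : selIdx e m (selSet π K e m y) = sInf {i | y ∈ N i} := by
          rw [selIdx, hTset y hy]
        by_cases hT : {i | y ∈ N i}.Nonempty
        · left
          have h1 := Nat.sInf_mem hT
          rw [← hIdef, hm] at h1
          refine ⟨h1, fun i hi => ?_⟩
          have := Nat.notMem_of_lt_sInf (s := {i | y ∈ N i}) (m := i) ?_
          · exact this
          · rw [← hIdef, hm]; exact hi
        · right
          rw [Set.not_nonempty_iff_eq_empty] at hT
          constructor
          · intro i hi
            have : i ∈ {i | y ∈ N i} := hi
            simp [hT] at this
          · rw [← hm, hIdef, hT, Nat.sInf_empty]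
      · rintro ⟨hy, hrest⟩
        intro k hk
        rcases Nat.lt_succ_iff_lt_or_eq.1 hk with hk' | rfl
        · exact hy k hk'
        have hIdef : selIdx e k (selSet π K e k y) = sInf {i | y ∈ N i} := by
          rw [selIdx, hTset y hy]
        rcases hrest with ⟨hmem, hlt⟩ | ⟨hall, h0⟩
        · rw [hIdef]
          refine le_antisymm (Nat.sInf_le hmem) ?_
          by_contra hcon
          push_neg at hcon
          have h1 := Nat.sInf_mem (⟨v k, hmem⟩ : {i | y ∈ N i}.Nonempty)
          exact hlt _ hcon h1
        · have : {i | y ∈ N i} = ∅ := by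
            ext i; simp only [Set.mem_setOf_eq, Set.mem_empty_iff_false, iff_false]
            exact hall i
          rw [hIdef, this, Nat.sInf_empty, h0]
    rw [hsplit]
    exact (ih v).inter
      (((hNmeas _).diff (MeasurableSet.biUnion (Finset.range (v m)).countable_toSet
          fun i _ => hNmeas i)).union
        ((MeasurableSet.iInter fun i => (hNmeas i).compl).inter (MeasurableSet.const _)))

lemma measurable_selIdx (π : X → Y) (hπ : Continuous π) {K : Set X} (hK : IsCompact K)
    (e : ℕ → X) (m : ℕ) :
    Measurable fun y => selIdx e m (selSet π K e m y) := by
  apply measurable_to_countable'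
  intro j
  have : (fun y => selIdx e m (selSet π K e m y)) ⁻¹' {j}
      = ⋃ v : Fin m → ℕ, {y | ∀ k < m + 1, selIdx e k (selSet π K e k y)
          = (fun k => if h : k < m then v ⟨k, h⟩ else j) k} := by
    ext y
    simp only [Set.mem_preimage, Set.mem_singleton_iff, Set.mem_iUnion, Set.mem_setOf_eq]
    constructor
    · intro h
      refine ⟨fun k => selIdx e k.1 (selSet π K e k.1 y), fun k hk => ?_⟩
      rcases Nat.lt_succ_iff_lt_or_eq.1 hk with hk' | rfl
      · simp [hk']
      · simpa using h
    · intro ⟨v, hv⟩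
      have := hv m (Nat.lt_succ_self m)
      simpa using this
  rw [this]
  exact MeasurableSet.iUnion fun v => measurableSet_cyl π hπ hK e (m + 1) _

end EqSel2

section SelectionMain

open EqSel EqSel2

/-- **Measurable selection** for a continuous map restricted to a compact set: there is a
measurable map `s : Y → X` which, on `π '' K`, selects a point of `K` in the fiber. -/
lemma exists_measurable_selection {X Y : Type*} [TopologicalSpace X] [PolishSpace X]
    [MeasurableSpace X] [BorelSpace X] [TopologicalSpace Y] [T2Space Y]
    [MeasurableSpace Y] [OpensMeasurableSpace Y]
    (π : X → Y) (hπ : Continuous π) (K : Set X) (hK : IsCompact K) (hne : K.Nonempty) :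
    ∃ s : Y → X, Measurable s ∧ ∀ y ∈ π '' K, s y ∈ K ∧ π (s y) = y := by
  classical
  letI := TopologicalSpace.upgradeIsCompletelyMetrizable X
  obtain ⟨x₀, hx₀⟩ := hne
  have : Nonempty X := ⟨x₀⟩
  obtain ⟨e, he⟩ := TopologicalSpace.exists_dense_seq X
  have hanti : ∀ y m, selSet π K e (m + 1) y ⊆ selSet π K e m y :=
    fun y m => Set.inter_subset_left
  have hcpt : ∀ y m, IsCompact (selSet π K e m y) := fun y m =>
    selSet_isCompact π hπ hK e m y
  have hInterNe : ∀ y ∈ π '' K, (⋂ m, selSet π K e m y).Nonempty := fun y hy =>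
    IsCompact.nonempty_iInter_of_sequence_nonempty_isCompact_isClosed _
      (fun m => hanti y m) (fun m => selSet_nonempty π K he m hy)
      (hcpt y 0) (fun m => (hcpt y m).isClosed)
  have hchoice : ∀ y : Y, ∃ x : X,
      (y ∈ π '' K → x ∈ ⋂ m, selSet π K e m y) ∧ (y ∉ π '' K → x = x₀) := by
    intro y
    by_cases hy : y ∈ π '' K
    · exact ⟨(hInterNe y hy).some, fun _ => (hInterNe y hy).some_mem, fun h => absurd hy h⟩
    · exact ⟨x₀, fun h => absurd h hy, fun _ => rfl⟩
  choose s hs1 hs2 using hchoice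
  have hKmeas : MeasurableSet (π '' K) := (hK.image hπ).isClosed.measurableSet
  have hsmeas : Measurable s := by
    have happrox : ∀ m : ℕ, Measurable fun y =>
        if y ∈ π '' K then e (selIdx e m (selSet π K e m y)) else x₀ := fun m =>
      Measurable.ite hKmeas
        (measurable_from_top.comp (measurable_selIdx π hπ hK e m)) measurable_const
    refine measurable_of_tendsto_metrizable happrox (tendsto_pi_nhds.2 fun y => ?_)
    by_cases hy : y ∈ π '' K
    · have hdist : ∀ m : ℕ,
          dist (if y ∈ π '' K then e (selIdx e m (selSet π K e m y)) else x₀) (s y)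
            ≤ (1 / 2) ^ m := by
        intro m
        rw [if_pos hy]
        have hsmem : s y ∈ selSet π K e (m + 1) y := by
          have := hs1 y hy
          simp only [Set.mem_iInter] at this
          exact this (m + 1)
        have : s y ∈ Metric.closedBall (e (selIdx e m (selSet π K e m y))) ((1 / 2) ^ m) :=
          hsmem.2
        rw [Metric.mem_closedBall] at this
        rw [dist_comm]
        exact this
      rw [tendsto_iff_dist_tendsto_zero]
      refine squeeze_zero (fun m => dist_nonneg) hdist ?_
      exact tendsto_pow_atTop_nhds_zero_of_lt_one (by norm_num) (by norm_num)
    · simp only [if_neg hy, hs2 y hy]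
      exact tendsto_const_nhds
  refine ⟨s, hsmeas, fun y hy => ?_⟩
  have h0 : s y ∈ selSet π K e 0 y := by
    have := hs1 y hy
    simp only [Set.mem_iInter] at this
    exact this 0
  exact ⟨h0.1, h0.2⟩

end SelectionMain

end AuxSelection

open ProbabilityTheory

/-- Theorem `thm:potential`: under (A1)–(A8), a measure `Q₀ ∈ 𝓟_{m₀}(X)` is an equilibrium of
the non-atomic game if and only if it is a critical point of `𝓙` in `𝓟_{m₀}(X)`, i.e.,
`𝓙(Q₀) < +∞` and `∫ F(·,Q₀) dQ₀ ≤ ∫ F(·,Q₀) dQ` for every `Q ∈ dom 𝓙 ∩ 𝓟_{m₀}(X)`. -/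
theorem equilibrium_iff_critical_point
    {X Y : Type*}
    [TopologicalSpace X] [PolishSpace X] [MeasurableSpace X] [BorelSpace X]
    [TopologicalSpace Y] [PolishSpace Y] [MeasurableSpace Y] [BorelSpace Y]
    (π : X → Y) (hπ : Continuous π)
    (L : X → ℝ≥0∞) (hL : LowerSemicontinuous L)
    (H : X → X → ℝ≥0∞) (hH : Measurable (Function.uncurry H))
    (hsym : ∀ x x' : X, H x x' = H x' x)
    (hA5 : LowerSemicontinuous fun p : X × X => Jcost L H p.1 p.2)
    (κ : ℝ) (hκpos : 0 < κ)
    (hA6 : ∀ y : Y, ∃ x : X, π x = y ∧ L x ≤ ENNReal.ofReal κ)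
    (hA7 : ∀ c : ℝ, 0 < c → IsCompact {x : X | L x ≤ ENNReal.ofReal c})
    (C : ℝ) (hCpos : 0 < C)
    (hA8 : ∀ x x' : X, H x x' ≤ ENNReal.ofReal C * (L x + L x' + 1))
    (m₀ : Measure Y) [IsProbabilityMeasure m₀]
    (Q₀ : Measure X) [IsProbabilityMeasure Q₀] (hmap : Q₀.map π = m₀) :
    ((∫⁻ x, Fcost L H x Q₀ ∂Q₀) ≠ ⊤ ∧
      ∀ᵐ x ∂Q₀, Fcost L H x Q₀ = ⨅ (z : X) (_ : π z = π x), Fcost L H z Q₀)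
    ↔
    (Jpot L H Q₀ ≠ ⊤ ∧
      ∀ Q : Measure X, IsProbabilityMeasure Q → Q.map π = m₀ → Jpot L H Q ≠ ⊤ →
        (∫⁻ x, Fcost L H x Q₀ ∂Q₀) ≤ ∫⁻ x, Fcost L H x Q₀ ∂Q) := by
  classical
  haveI hXne : Nonempty X := by
    by_contra h
    rw [not_nonempty_iff] at h
    have h1 : Q₀ Set.univ = 1 := measure_univ
    rw [Set.univ_eq_empty_iff.2 h, measure_empty] at h1
    exact zero_ne_one h1
  have hLm : Measurable L := hL.measurable
  have hH' : Measurable fun p : X × X => H p.1 p.2 := hH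
  have hHm1 : Measurable fun x => ∫⁻ x', H x x' ∂Q₀ := Measurable.lintegral_prod_right hH
  set F : X → ℝ≥0∞ := fun x => Fcost L H x Q₀ with hFdef
  have hFm : Measurable F := hLm.add hHm1
  set IL : Measure X → ℝ≥0∞ := fun Q => ∫⁻ x, L x ∂Q with hILdef
  have hJm : Measurable fun p : X × X => Jcost L H p.1 p.2 :=
    ((hLm.comp measurable_fst).add (hLm.comp measurable_snd)).add hH'
  -- inner integral computations
  have hinner : ∀ (Q' : Measure X), IsProbabilityMeasure Q' → ∀ x,
      ∫⁻ x', (L x + L x' + 1) ∂Q' = L x + IL Q' + 1 := by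
    intro Q' hQ' x
    rw [lintegral_add_right _ measurable_const, lintegral_add_left measurable_const,
      lintegral_const, lintegral_const, measure_univ, mul_one, mul_one]
  have hinnerJ : ∀ (Q' : Measure X), IsProbabilityMeasure Q' → ∀ x,
      ∫⁻ x', Jcost L H x x' ∂Q' = L x + IL Q' + ∫⁻ x', H x x' ∂Q' := by
    intro Q' hQ' x
    have hHx : Measurable fun x' => H x x' := hH'.comp measurable_prodMk_left
    have hfun : (fun x' => Jcost L H x x') = fun x' => L x + L x' + H x x' := rfl
    rw [hfun, lintegral_add_right _ hHx, lintegral_add_left measurable_const,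
      lintegral_const, measure_univ, mul_one]
  have hJpot : ∀ Q : Measure X, IsProbabilityMeasure Q →
      Jpot L H Q = IL Q + IL Q + ∫⁻ x, ∫⁻ x', H x x' ∂Q ∂Q := by
    intro Q hQ
    rw [Jpot, lintegral_prod _ hJm.aemeasurable]
    simp_rw [hinnerJ Q hQ]
    rw [lintegral_add_right _ (Measurable.lintegral_prod_right hH'),
      lintegral_add_right _ measurable_const, lintegral_const, measure_univ, mul_one]
  have hFint : ∀ Q : Measure X,
      ∫⁻ x, F x ∂Q = IL Q + ∫⁻ x, ∫⁻ x', H x x' ∂Q₀ ∂Q := by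
    intro Q
    exact lintegral_add_right (μ := Q) L hHm1
  have hHbound : ∀ (Q Q' : Measure X), IsProbabilityMeasure Q → IsProbabilityMeasure Q' →
      ∫⁻ x, ∫⁻ x', H x x' ∂Q' ∂Q ≤ ENNReal.ofReal C * (IL Q + IL Q' + 1) := by
    intro Q Q' hQ hQ'
    calc ∫⁻ x, ∫⁻ x', H x x' ∂Q' ∂Q
        ≤ ∫⁻ x, ∫⁻ x', ENNReal.ofReal C * (L x + L x' + 1) ∂Q' ∂Q :=
          lintegral_mono fun x => lintegral_mono fun x' => hA8 x x'
      _ = ENNReal.ofReal C * (IL Q + IL Q' + 1) := by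
          have h1 : ∀ x, ∫⁻ x', ENNReal.ofReal C * (L x + L x' + 1) ∂Q'
              = ENNReal.ofReal C * (L x + IL Q' + 1) := by
            intro x
            rw [lintegral_const_mul (f := fun x' => L x + L x' + 1) _
                ((measurable_const.add hLm).add measurable_const),
              hinner Q' hQ' x]
          simp_rw [h1]
          rw [lintegral_const_mul (f := fun x => L x + IL Q' + 1) _
            ((hLm.add measurable_const).add measurable_const)]
          congr 1
          rw [lintegral_add_right _ measurable_const,
            lintegral_add_right _ measurable_const]
          simp [hILdef]
  have hJfin_iff : ∀ Q : Measure X, IsProbabilityMeasure Q → (Jpot L H Q ≠ ⊤ ↔ IL Q ≠ ⊤) := by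
    intro Q hQ
    constructor
    · intro h hIL
      apply h
      rw [hJpot Q hQ, hIL]
      simp
    · intro hIL
      rw [hJpot Q hQ]
      have := hHbound Q Q hQ hQ
      refine ENNReal.add_ne_top.2 ⟨ENNReal.add_ne_top.2 ⟨hIL, hIL⟩, ?_⟩
      exact ne_top_of_le_ne_top (ENNReal.mul_ne_top ENNReal.ofReal_ne_top
        (ENNReal.add_ne_top.2 ⟨ENNReal.add_ne_top.2 ⟨hIL, hIL⟩, ENNReal.one_ne_top⟩)) this
  have hFfin_iff : ((∫⁻ x, F x ∂Q₀) ≠ ⊤ ↔ IL Q₀ ≠ ⊤) := by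
    constructor
    · intro h hIL
      apply h
      rw [hFint Q₀, hIL]
      simp
    · intro hIL
      rw [hFint Q₀]
      have := hHbound Q₀ Q₀ inferInstance inferInstance
      refine ENNReal.add_ne_top.2 ⟨hIL, ?_⟩
      exact ne_top_of_le_ne_top (ENNReal.mul_ne_top ENNReal.ofReal_ne_top
        (ENNReal.add_ne_top.2 ⟨ENNReal.add_ne_top.2 ⟨hIL, hIL⟩, ENNReal.one_ne_top⟩)) this
  constructor
  · -- equilibrium → critical point
    rintro ⟨hFfin, hae⟩
    have hIL : IL Q₀ ≠ ⊤ := hFfin_iff.1 hFfin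
    refine ⟨(hJfin_iff Q₀ inferInstance).2 hIL, ?_⟩
    intro Q hQprob hQmap _
    have hfm : Measurable fun x : X => (π x, x) := hπ.measurable.prodMk measurable_id
    have hfe : MeasurableEmbedding fun x : X => (π x, x) :=
      hfm.measurableEmbedding fun a b hab => congrArg Prod.snd hab
    set c : Y → ℝ≥0∞ := fun y => ⨅ (z : X) (_ : π z = y), F z with hc
    have key : ∀ (ν : Measure X), IsProbabilityMeasure ν → ν.map π = m₀ →
        ∀ (p : X → Prop), (∀ᵐ x ∂ν, p x) →
        ∃ κν : ProbabilityTheory.Kernel Y X, ProbabilityTheory.IsMarkovKernel κν ∧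
          (∫⁻ x, F x ∂ν = ∫⁻ y, ∫⁻ x, F x ∂(κν y) ∂m₀) ∧
          (∀ᵐ y ∂m₀, ∀ᵐ x ∂(κν y), π x = y ∧ p x) := by
      intro ν hν hνmap p hp
      haveI : IsProbabilityMeasure (ν.map fun x : X => (π x, x)) :=
        Measure.isProbabilityMeasure_map hfm.aemeasurable
      set ρ : Measure (Y × X) := ν.map (fun x => (π x, x)) with hρ
      have hfst : ρ.fst = m₀ := by
        rw [hρ, Measure.fst, Measure.map_map measurable_fst hfm]
        exact hνmap
      refine ⟨ρ.condKernel, inferInstance, ?_, ?_⟩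
      · have h1 : ∫⁻ x, F x ∂ν = ∫⁻ z : Y × X, F z.2 ∂ρ :=
          (lintegral_map (hFm.comp measurable_snd) hfm).symm
        have hdis : ρ.fst ⊗ₘ ρ.condKernel = ρ := ρ.disintegrate _
        calc ∫⁻ x, F x ∂ν = ∫⁻ z : Y × X, F z.2 ∂ρ := h1
          _ = ∫⁻ z : Y × X, F z.2 ∂(ρ.fst ⊗ₘ ρ.condKernel) := by rw [hdis]
          _ = ∫⁻ y, ∫⁻ x, F x ∂(ρ.condKernel y) ∂(ρ.fst) :=
              Measure.lintegral_compProd (hFm.comp measurable_snd)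
          _ = ∫⁻ y, ∫⁻ x, F x ∂(ρ.condKernel y) ∂m₀ := by rw [hfst]
      · have h2 : ∀ᵐ z : Y × X ∂ρ, π z.2 = z.1 ∧ p z.2 := by
          rw [hρ, hfe.ae_map_iff]
          filter_upwards [hp] with x hx using ⟨rfl, hx⟩
        have hdis : ρ.fst ⊗ₘ ρ.condKernel = ρ := ρ.disintegrate _
        have h2' : ∀ᵐ z : Y × X ∂(ρ.fst ⊗ₘ ρ.condKernel), π z.2 = z.1 ∧ p z.2 := by
          rw [hdis]
          exact h2
        have h3 := Measure.ae_ae_of_ae_compProd h2'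
        rwa [hfst] at h3
    obtain ⟨κ₀, hκ₀M, hκ₀int, hκ₀ae⟩ := key Q₀ inferInstance hmap _ hae
    obtain ⟨κQ, hκQM, hκQint, hκQae⟩ :=
      key Q hQprob hQmap (fun _ => True) (Filter.Eventually.of_forall fun _ => trivial)
    rw [hκ₀int, hκQint]
    apply lintegral_mono_ae
    filter_upwards [hκ₀ae, hκQae] with y h₀ hQ'
    haveI := hκ₀M
    haveI := hκQM
    have h1 : ∫⁻ x, F x ∂(κ₀ y) = c y := by
      have heq : ∀ᵐ x ∂(κ₀ y), F x = c y := by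
        filter_upwards [h₀] with x hx
        obtain ⟨hx1, hx2⟩ := hx
        have hx2' : F x = ⨅ (z : X), ⨅ (_ : π z = π x), F z := hx2
        rw [hx2', hx1]
      rw [lintegral_congr_ae heq, lintegral_const, measure_univ, mul_one]
    have h2 : c y ≤ ∫⁻ x, F x ∂(κQ y) := by
      calc c y = ∫⁻ _, c y ∂(κQ y) := by rw [lintegral_const, measure_univ, mul_one]
        _ ≤ ∫⁻ x, F x ∂(κQ y) := by
            apply lintegral_mono_ae
            filter_upwards [hQ'] with x hx
            exact iInf₂_le x hx.1
    rw [h1]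
    exact h2
  · -- critical point → equilibrium
    rintro ⟨hJfin, hcrit⟩
    have hIL : IL Q₀ ≠ ⊤ := (hJfin_iff Q₀ inferInstance).1 hJfin
    have hFfin : (∫⁻ x, F x ∂Q₀) ≠ ⊤ := hFfin_iff.2 hIL
    refine ⟨hFfin, ?_⟩
    set G : X → ℝ≥0∞ := fun x => ∫⁻ z, Jcost L H x z ∂Q₀ with hG
    have hGF : ∀ x, G x = F x + IL Q₀ := by
      intro x
      show (∫⁻ z, Jcost L H x z ∂Q₀) = F x + IL Q₀
      rw [hinnerJ Q₀ inferInstance x]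
      show L x + IL Q₀ + (∫⁻ x', H x x' ∂Q₀) = (L x + ∫⁻ x', H x x' ∂Q₀) + IL Q₀
      ring
    have hGlsc : LowerSemicontinuous G := by
      letI := TopologicalSpace.upgradeIsCompletelyMetrizable X
      intro x a ha
      by_contra hcon
      rw [Filter.not_eventually] at hcon
      have hseq : ∀ n : ℕ, ∃ x' : X, dist x' x < 1 / (n + 1) ∧ G x' ≤ a := by
        intro n
        have hball : Metric.ball x (1 / (n + 1)) ∈ 𝓝 x :=
          Metric.ball_mem_nhds x (by positivity)
        obtain ⟨x', hx'1, hx'2⟩ := (hcon.and_eventually hball).exists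
        exact ⟨x', by simpa [Metric.mem_ball] using hx'2, not_lt.1 hx'1⟩
      choose u hu1 hu2 using hseq
      have hutd : Filter.Tendsto u Filter.atTop (𝓝 x) := by
        rw [tendsto_iff_dist_tendsto_zero]
        refine squeeze_zero (fun n => dist_nonneg) (fun n => (hu1 n).le) ?_
        exact tendsto_one_div_add_atTop_nhds_zero_nat
      have step1 : ∀ z, Jcost L H x z ≤
          Filter.liminf (fun n => Jcost L H (u n) z) Filter.atTop := by
        intro z
        refine le_of_forall_lt_imp_le_of_dense fun b hb => ?_
        have hev := hA5 (x, z) b hb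
        have htz : Filter.Tendsto (fun n => (u n, z)) Filter.atTop (𝓝 (x, z)) :=
          hutd.prodMk_nhds tendsto_const_nhds
        have := htz.eventually hev
        exact Filter.le_liminf_of_le (by isBoundedDefault)
          (this.mono fun n h => h.le)
      have step2 : G x ≤ ∫⁻ z, Filter.liminf (fun n => Jcost L H (u n) z) Filter.atTop ∂Q₀ :=
        lintegral_mono step1
      have step3 : ∫⁻ z, Filter.liminf (fun n => Jcost L H (u n) z) Filter.atTop ∂Q₀
          ≤ Filter.liminf (fun n => G (u n)) Filter.atTop :=
        lintegral_liminf_le fun n => hJm.comp measurable_prodMk_left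
      have step4 : Filter.liminf (fun n => G (u n)) Filter.atTop ≤ a := by
        calc Filter.liminf (fun n => G (u n)) Filter.atTop
            ≤ Filter.liminf (fun _ => a) Filter.atTop :=
              Filter.liminf_le_liminf (Filter.Eventually.of_forall hu2)
          _ = a := Filter.liminf_const a
      exact (not_le.2 ha) (step2.trans (step3.trans step4))
    have hFlsc : LowerSemicontinuous F := by
      rw [lowerSemicontinuous_iff_isOpen_preimage]
      intro a
      have hset : F ⁻¹' Set.Ioi a = G ⁻¹' Set.Ioi (a + IL Q₀) := by
        ext x
        simp only [Set.mem_preimage, Set.mem_Ioi, hGF x]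
        exact (ENNReal.add_lt_add_iff_right hIL).symm
      rw [hset]
      exact hGlsc.isOpen_preimage _
    set D : ℚ → Set X := fun q => {z | F z ≤ ENNReal.ofReal q} with hD
    have hDclosed : ∀ q : ℚ, IsClosed (D q) := by
      intro q
      have : D q = (F ⁻¹' Set.Ioi (ENNReal.ofReal q))ᶜ := by
        ext z
        simp [hD, not_lt]
      rw [this]
      exact (hFlsc.isOpen_preimage _).isClosed_compl
    have hDcpt : ∀ q : ℚ, IsCompact (D q) := by
      intro q
      refine (hA7 (|(q : ℝ)| + 1) (by positivity)).of_isClosed_subset (hDclosed q) ?_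
      intro z hz
      have h1 : L z ≤ F z := le_self_add
      have h2 : F z ≤ ENNReal.ofReal q := hz
      exact Set.mem_setOf_eq ▸ ((h1.trans h2).trans
        (ENNReal.ofReal_le_ofReal ((le_abs_self _).trans (le_add_of_nonneg_right zero_le_one))))
    set A : ℚ → ℚ → Set X := fun q r =>
      {x | ENNReal.ofReal r ≤ F x} ∩ π ⁻¹' (π '' D q) with hAdef
    have hAmeas : ∀ q r : ℚ, MeasurableSet (A q r) := fun q r =>
      (hFm measurableSet_Ici).inter
        (hπ.measurable (((hDcpt q).image hπ).isClosed.measurableSet))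
    have key : ∀ q r : ℚ, ENNReal.ofReal q < ENNReal.ofReal r → Q₀ (A q r) = 0 := by
      intro q r hqr
      by_contra hpos
      have hDne : (D q).Nonempty := by
        rcases Set.eq_empty_or_nonempty (D q) with h | h
        · refine absurd ?_ hpos
          rw [hAdef]
          simp [h]
        · exact h
      obtain ⟨s, hsmeas, hs⟩ := exists_measurable_selection π hπ (D q) (hDcpt q) hDne
      set T : X → X := fun x => if x ∈ A q r then s (π x) else x with hT
      have hTmeas : Measurable T :=
        Measurable.ite (hAmeas q r) (hsmeas.comp hπ.measurable) measurable_id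
      have hπT : ∀ x, π (T x) = π x := by
        intro x
        rw [hT]
        simp only
        split_ifs with hx
        · exact (hs (π x) hx.2).2
        · rfl
      have hFT_le : ∀ x ∈ A q r, F (T x) ≤ ENNReal.ofReal q := by
        intro x hx
        rw [hT]
        simp only [if_pos hx]
        exact (hs (π x) hx.2).1
      haveI hQprob : IsProbabilityMeasure (Q₀.map T) :=
        Measure.isProbabilityMeasure_map hTmeas.aemeasurable
      have hQmap : (Q₀.map T).map π = m₀ := by
        rw [Measure.map_map hπ.measurable hTmeas]
        have : π ∘ T = π := funext hπT
        rw [this, hmap]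
      have hILT : IL (Q₀.map T) ≠ ⊤ := by
        rw [hILdef]
        simp only
        rw [lintegral_map hLm hTmeas]
        have hb : ∀ x, L (T x) ≤ L x + ENNReal.ofReal q := by
          intro x
          by_cases hx : x ∈ A q r
          · calc L (T x) ≤ F (T x) := le_self_add
              _ ≤ ENNReal.ofReal q := hFT_le x hx
              _ ≤ L x + ENNReal.ofReal q := le_add_self
          · rw [hT]
            simp only [if_neg hx]
            exact le_self_add
        refine ne_top_of_le_ne_top ?_ (lintegral_mono hb)
        rw [lintegral_add_right _ measurable_const, lintegral_const, measure_univ, mul_one]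
        exact ENNReal.add_ne_top.2 ⟨hIL, ENNReal.ofReal_ne_top⟩
      have hQJfin : Jpot L H (Q₀.map T) ≠ ⊤ := (hJfin_iff _ hQprob).2 hILT
      have hle := hcrit (Q₀.map T) hQprob hQmap hQJfin
      rw [lintegral_map hFm hTmeas] at hle
      have hAub : ∫⁻ x in A q r, F (T x) ∂Q₀ ≤ ENNReal.ofReal q * Q₀ (A q r) := by
        calc ∫⁻ x in A q r, F (T x) ∂Q₀ ≤ ∫⁻ _ in A q r, ENNReal.ofReal q ∂Q₀ :=
              setLIntegral_mono measurable_const fun x hx => hFT_le x hx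
          _ = ENNReal.ofReal q * Q₀ (A q r) := by rw [setLIntegral_const]
      have hAlb : ENNReal.ofReal r * Q₀ (A q r) ≤ ∫⁻ x in A q r, F x ∂Q₀ := by
        calc ENNReal.ofReal r * Q₀ (A q r) = ∫⁻ _ in A q r, ENNReal.ofReal r ∂Q₀ := by
              rw [setLIntegral_const]
          _ ≤ ∫⁻ x in A q r, F x ∂Q₀ := setLIntegral_mono hFm fun x hx => hx.1
      have hcompl : ∫⁻ x in (A q r)ᶜ, F (T x) ∂Q₀ = ∫⁻ x in (A q r)ᶜ, F x ∂Q₀ := by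
        apply setLIntegral_congr_fun (hAmeas q r).compl
        intro x hx
        rw [hT]
        simp only [if_neg hx]
      have hcfin : (∫⁻ x in (A q r)ᶜ, F x ∂Q₀) ≠ ⊤ :=
        ne_top_of_le_ne_top hFfin (setLIntegral_le_lintegral _ _)
      have hstrict : ∫⁻ x, F (T x) ∂Q₀ < ∫⁻ x, F x ∂Q₀ := by
        rw [← lintegral_add_compl (fun x => F (T x)) (hAmeas q r),
          ← lintegral_add_compl F (hAmeas q r), hcompl]
        refine (ENNReal.add_lt_add_iff_right hcfin).2 ?_
        calc ∫⁻ x in A q r, F (T x) ∂Q₀ ≤ ENNReal.ofReal q * Q₀ (A q r) := hAub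
          _ < ENNReal.ofReal r * Q₀ (A q r) :=
              (ENNReal.mul_lt_mul_iff_left hpos (measure_ne_top Q₀ _)).2 hqr
          _ ≤ ∫⁻ x in A q r, F x ∂Q₀ := hAlb
      exact absurd hle (not_le.2 hstrict)
    have hae2 : ∀ᵐ x ∂Q₀, ∀ q r : ℚ, ENNReal.ofReal q < ENNReal.ofReal r → x ∉ A q r := by
      rw [MeasureTheory.ae_all_iff]
      intro q
      rw [MeasureTheory.ae_all_iff]
      intro r
      by_cases hqr : ENNReal.ofReal q < ENNReal.ofReal r
      · have h0 := key q r hqr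
        filter_upwards [measure_eq_zero_iff_ae_notMem.1 h0] with x hx _
        exact hx
      · exact Filter.Eventually.of_forall fun x h => absurd h hqr
    filter_upwards [hae2] with x hx
    have hge : (⨅ (z : X) (_ : π z = π x), Fcost L H z Q₀) ≤ Fcost L H x Q₀ :=
      iInf₂_le x (rfl : π x = π x)
    refine le_antisymm ?_ hge
    refine le_iInf₂ fun z hz => ?_
    by_contra hcon
    push_neg at hcon
    obtain ⟨q, hq0, h1, h2⟩ := ENNReal.lt_iff_exists_rat_btwn.1 hcon
    obtain ⟨r, hr0, h3, h4⟩ := ENNReal.lt_iff_exists_rat_btwn.1 h2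
    have hzD : z ∈ D q := by
      rw [hD]
      exact le_of_lt (by exact_mod_cast h1)
    have hxA : x ∈ A q r := by
      rw [hAdef]
      refine ⟨le_of_lt (by exact_mod_cast h4), ⟨z, hzD, hz⟩⟩
    exact hx q r h3 hxA
end
end

section
/- Assume (A5) and (A9): for every Q ∈ 𝓟(X) with 𝓛(Q) < +∞, the set Opt(Q) = {x ∈ X : F(x,Q) = inf{F(z,Q) : z ∈ X, π(z) = π(x)}} is closed. Then, for m₀ ∈ 𝓟(Y), a measure Q ∈ 𝓟_{m₀}(X) is an equilibrium (π_#Q = m₀, ∫_X F(x,Q) dQ(x) < +∞, and for Q-almost every x, F(x,Q) = inf{F(z,Q) : π(z) = π(x)}) if and only if it is a strong equilibrium (π_#Q = m₀, ∫_X F(x,Q) dQ(x) < +∞, and for every x ∈ supp Q, F(x,Q) = inf{F(z,Q) : π(z) = π(x)}). -/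
open MeasureTheory Filter Topology Set
open scoped ENNReal

noncomputable section

/-- Theorem `thm:strong-iff-equilibrium`: under (A5) and (A9), `Q ∈ 𝓟_{m₀}(X)` is an
equilibrium of the non-atomic game if and only if it is a strong equilibrium (optimality holds
at every point of the support of `Q`). -/
theorem equilibrium_iff_strong_equilibrium
    {X Y : Type*}
    [TopologicalSpace X] [PolishSpace X] [MeasurableSpace X] [BorelSpace X]
    [TopologicalSpace Y] [PolishSpace Y] [MeasurableSpace Y] [BorelSpace Y]
    (π : X → Y) (hπ : Continuous π)
    (L : X → ℝ≥0∞) (hL : LowerSemicontinuous L)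
    (H : X → X → ℝ≥0∞) (hH : Measurable (Function.uncurry H))
    (hA5 : LowerSemicontinuous fun p : X × X => Jcost L H p.1 p.2)
    (hA9 : ∀ Q : Measure X, IsProbabilityMeasure Q → (∫⁻ x, L x ∂Q) ≠ ⊤ →
      IsClosed {x : X | Fcost L H x Q = ⨅ (z : X) (_ : π z = π x), Fcost L H z Q})
    (m₀ : Measure Y) [IsProbabilityMeasure m₀]
    (Q : Measure X) [IsProbabilityMeasure Q] :
    (Q.map π = m₀ ∧ (∫⁻ x, Fcost L H x Q ∂Q) ≠ ⊤ ∧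
      ∀ᵐ x ∂Q, Fcost L H x Q = ⨅ (z : X) (_ : π z = π x), Fcost L H z Q)
    ↔
    (Q.map π = m₀ ∧ (∫⁻ x, Fcost L H x Q ∂Q) ≠ ⊤ ∧
      ∀ x : X, (∀ U : Set X, IsOpen U → x ∈ U → 0 < Q U) →
        Fcost L H x Q = ⨅ (z : X) (_ : π z = π x), Fcost L H z Q) := by
  constructor
  · rintro ⟨hmap, hfin, hae⟩
    refine ⟨hmap, hfin, fun x hx => ?_⟩
    have hLfin : (∫⁻ x, L x ∂Q) ≠ ⊤ := by
      refine ne_top_of_le_ne_top hfin (lintegral_mono fun x => ?_)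
      exact le_self_add
    have hclosed := hA9 Q inferInstance hLfin
    by_contra hxS
    have hopen : IsOpen {x : X | Fcost L H x Q = ⨅ (z : X) (_ : π z = π x), Fcost L H z Q}ᶜ :=
      hclosed.isOpen_compl
    have hpos := hx _ hopen hxS
    have hzero : Q {x : X | ¬ (Fcost L H x Q = ⨅ (z : X) (_ : π z = π x), Fcost L H z Q)} = 0 :=
      ae_iff.mp hae
    rw [show {x : X | ¬ (Fcost L H x Q = ⨅ (z : X) (_ : π z = π x), Fcost L H z Q)}
        = {x : X | Fcost L H x Q = ⨅ (z : X) (_ : π z = π x), Fcost L H z Q}ᶜ from rfl] at hzero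
    exact absurd hzero hpos.ne'
  · rintro ⟨hmap, hfin, hsupp⟩
    refine ⟨hmap, hfin, ?_⟩
    -- the union of all null open sets is null (second countable)
    set 𝒮 : Set (Set X) := {V | IsOpen V ∧ Q V = 0} with h𝒮
    obtain ⟨T, hTc, hTsub, hTU⟩ := TopologicalSpace.isOpen_sUnion_countable 𝒮
      (fun V hV => hV.1)
    have hUnull : Q (⋃₀ 𝒮) = 0 := by
      rw [← hTU]
      exact (measure_sUnion_null_iff hTc).mpr fun V hV => (hTsub hV).2
    have hsub : {x : X | ¬ (Fcost L H x Q = ⨅ (z : X) (_ : π z = π x), Fcost L H z Q)}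
        ⊆ ⋃₀ 𝒮 := by
      intro x hx
      by_cases hxsup : ∀ U : Set X, IsOpen U → x ∈ U → 0 < Q U
      · exact absurd (hsupp x hxsup) hx
      · push_neg at hxsup
        obtain ⟨U, hUo, hxU, hU0⟩ := hxsup
        exact ⟨U, ⟨hUo, le_antisymm hU0 zero_le⟩, hxU⟩
    exact ae_iff.mpr (measure_mono_null hsub hUnull)
end
end

section
/- Assume (H1), (H2), (H3), (H4), and (H5), and define L and H as in the mean field game model. Then there exists a constant C' > 0 such that H(γ,γ̃) ≤ C'(L(γ) + L(γ̃) + 1) for all γ, γ̃ ∈ Γ. -/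
open MeasureTheory Filter Topology Set
open scoped ENNReal NNReal

noncomputable section

/-- Euclidean space `ℝ^d`. -/
abbrev EucSp (d : ℕ) := EuclideanSpace ℝ (Fin d)

/-- The space `Γ = C(ℝ₊, Ω̄)` of continuous curves with values in `closure Ω`, endowed with
the topology of uniform convergence on compact time intervals (the compact-open topology). -/
abbrev CurveSp {d : ℕ} (Ω : Set (EucSp d)) :=
  {γ : C(ℝ≥0, EucSp d) // ∀ t : ℝ≥0, γ t ∈ closure Ω}

variable {d : ℕ}

/-- `γ` is absolutely continuous with (locally integrable) velocity `g`. -/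
def HasVel {Ω : Set (EucSp d)} (γ : CurveSp Ω) (g : ℝ → EucSp d) : Prop :=
  (∀ T : ℝ, IntegrableOn g (Set.Icc 0 T) volume) ∧
    ∀ t : ℝ≥0, γ.1 t = γ.1 0 + ∫ s in Set.Ioc (0 : ℝ) (t : ℝ), g s

/-- The first exit time `τ(γ) = inf {t ≥ 0 | γ(t) ∈ Ξ}`, with value `+∞` if `γ` never
reaches `Ξ`. -/
def exitT {Ω : Set (EucSp d)} (Ξ : Set (EucSp d)) (γ : CurveSp Ω) : ℝ≥0∞ :=
  ⨅ (t : ℝ≥0) (_ : γ.1 t ∈ Ξ), (t : ℝ≥0∞)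

/-- The extension of a nondecreasing `Ψ : ℝ₊ → ℝ₊` to `[0,+∞]`: for finite `T` it coincides
with `Ψ(T)` (as `Ψ` is nondecreasing), and `Ψ(+∞) = sup Ψ`. -/
def PsiExt (Ψ : ℝ → ℝ) (T : ℝ≥0∞) : ℝ≥0∞ :=
  ⨆ (t : ℝ≥0) (_ : (t : ℝ≥0∞) ≤ T), ENNReal.ofReal (Ψ (t : ℝ))

/-- The individual cost `L(γ) = ∫₀^∞ ℓ(t,γ(t),γ̇(t)) dt + Ψ(τ(γ))` if `γ` is absolutely
continuous, and `L(γ) = +∞` otherwise (the infimum over an empty family is `+∞`; any two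
velocities of `γ` agree a.e., so the infimum is the common value of the integral). -/
def Lcost {Ω : Set (EucSp d)} (ℓ : ℝ → EucSp d → EucSp d → ℝ) (Ψ : ℝ → ℝ)
    (Ξ : Set (EucSp d)) (γ : CurveSp Ω) : ℝ≥0∞ :=
  (⨅ (g : ℝ → EucSp d) (_ : HasVel γ g),
    ∫⁻ t in Set.Ioi (0 : ℝ), ENNReal.ofReal (ℓ t (γ.1 t.toNNReal) (g t))) +
  PsiExt Ψ (exitT Ξ γ)

/-- The raw pairwise interaction cost
`∫₀^{τ(γ) ∧ τ(γ̃)} h(t,γ(t),γ̃(t),γ̇(t),γ̃̇(t)) dt`, equal to `+∞` when one of the curves is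
not absolutely continuous. -/
def interCost {Ω : Set (EucSp d)}
    (h : ℝ → EucSp d → EucSp d → EucSp d → EucSp d → ℝ)
    (Ξ : Set (EucSp d)) (γ γ' : CurveSp Ω) : ℝ≥0∞ :=
  ⨅ (g : ℝ → EucSp d) (_ : HasVel γ g) (g' : ℝ → EucSp d) (_ : HasVel γ' g'),
    ∫⁻ t in {t : ℝ | 0 < t ∧ ENNReal.ofReal t < min (exitT Ξ γ) (exitT Ξ γ')},
      ENNReal.ofReal (h t (γ.1 t.toNNReal) (γ'.1 t.toNNReal) (g t) (g' t))

/-- The interaction cost `H(γ,γ̃)`, equal to the raw interaction cost when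
`L(γ) < +∞` and `L(γ̃) < +∞`, and to `+∞` otherwise. -/
def Hcost {Ω : Set (EucSp d)} (ℓ : ℝ → EucSp d → EucSp d → ℝ) (Ψ : ℝ → ℝ)
    (h : ℝ → EucSp d → EucSp d → EucSp d → EucSp d → ℝ)
    (Ξ : Set (EucSp d)) (γ γ' : CurveSp Ω) : ℝ≥0∞ :=
  if Lcost ℓ Ψ Ξ γ ≠ ⊤ ∧ Lcost ℓ Ψ Ξ γ' ≠ ⊤ then interCost h Ξ γ γ' else ⊤

instance {Ω : Set (EucSp d)} : MeasurableSpace (CurveSp Ω) := borel _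
instance {Ω : Set (EucSp d)} : BorelSpace (CurveSp Ω) := ⟨rfl⟩

/-- The total cost `F(γ,Q)` from the mean field game, with the conventions of the paper:
`F(γ,Q) = +∞` if `γ` is not absolutely continuous, if `Q` gives positive measure to
non-absolutely-continuous curves, or if the inner interaction integral is not `Q`-integrable. -/
def F1cost {Ω : Set (EucSp d)} (ℓ : ℝ → EucSp d → EucSp d → ℝ) (Ψ : ℝ → ℝ)
    (h : ℝ → EucSp d → EucSp d → EucSp d → EucSp d → ℝ)
    (Ξ : Set (EucSp d)) (γ : CurveSp Ω) (Q : Measure (CurveSp Ω)) : ℝ≥0∞ :=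
  if Q {γ' : CurveSp Ω | ¬ ∃ g : ℝ → EucSp d, HasVel γ' g} = 0 then
    Lcost ℓ Ψ Ξ γ + ∫⁻ γ', interCost h Ξ γ γ' ∂Q
  else ⊤

/-- The total cost `F(γ,Q) = L(γ) + ∫ H(γ,·) dQ` of the associated abstract non-atomic game. -/
def F2cost {Ω : Set (EucSp d)} (ℓ : ℝ → EucSp d → EucSp d → ℝ) (Ψ : ℝ → ℝ)
    (h : ℝ → EucSp d → EucSp d → EucSp d → EucSp d → ℝ)
    (Ξ : Set (EucSp d)) (γ : CurveSp Ω) (Q : Measure (CurveSp Ω)) : ℝ≥0∞ :=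
  Lcost ℓ Ψ Ξ γ + ∫⁻ γ', Hcost ℓ Ψ h Ξ γ γ' ∂Q

/-- The geodesic (intrinsic) distance in `S`: the infimum of the lengths (total variations)
of continuous paths in `S` joining `x` to `y`. -/
def geoDist {d : ℕ} (S : Set (EucSp d)) (x y : EucSp d) : ℝ≥0∞ :=
  ⨅ (f : ℝ → EucSp d) (_ : ContinuousOn f (Set.Icc 0 1))
    (_ : ∀ t ∈ Set.Icc (0 : ℝ) 1, f t ∈ S) (_ : f 0 = x) (_ : f 1 = y),
    eVariationOn f (Set.Icc 0 1)



private lemma psiExt_lb (Ψ : ℝ → ℝ) (a b : ℝ) (ha : 0 < a) (hb : 0 < b)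
    (hΨlb : ∀ t ∈ Set.Ici (0:ℝ), a * t - b ≤ Ψ t) (T : ℝ≥0∞) :
    ENNReal.ofReal a * T ≤ PsiExt Ψ T + ENNReal.ofReal b := by
  rcases eq_or_ne T ⊤ with rfl | hT
  · have he : PsiExt Ψ ⊤ = ⨆ (t : ℝ≥0), ENNReal.ofReal (Ψ (t : ℝ)) := by
      simp [PsiExt]
    have htop : PsiExt Ψ ⊤ = ⊤ := by
      rw [he, eq_top_iff, le_iSup_iff]
      intro c hc
      rw [top_le_iff]
      by_contra hcne
      have hc0 : (0:ℝ) ≤ c.toReal := ENNReal.toReal_nonneg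
      set t0 : ℝ := (c.toReal + b + 1) / a with ht0def
      have ht0pos : 0 < t0 := by positivity
      have h1 : ENNReal.ofReal (Ψ ((t0.toNNReal : ℝ≥0) : ℝ)) ≤ c := hc t0.toNNReal
      have h2 : Ψ ((t0.toNNReal : ℝ≥0) : ℝ) ≤ c.toReal :=
        (ENNReal.ofReal_le_iff_le_toReal hcne).1 h1
      have h3 : ((t0.toNNReal : ℝ≥0) : ℝ) = t0 := Real.coe_toNNReal _ ht0pos.le
      rw [h3] at h2
      have h4 : a * t0 - b ≤ Ψ t0 := hΨlb t0 ht0pos.le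
      have h5 : a * t0 = c.toReal + b + 1 := by
        rw [ht0def, mul_div_assoc', mul_div_cancel_left₀ _ ha.ne']
      linarith
    rw [htop, top_add]
    exact le_top
  · have hTr : (0:ℝ) ≤ T.toReal := ENNReal.toReal_nonneg
    have hkey : ENNReal.ofReal (Ψ T.toReal) ≤ PsiExt Ψ T := by
      have hle : ((T.toNNReal : ℝ≥0∞)) ≤ T := le_of_eq (ENNReal.coe_toNNReal hT)
      exact le_iSup₂ (f := fun (t : ℝ≥0) (_ : (t : ℝ≥0∞) ≤ T) =>
        ENNReal.ofReal (Ψ (t : ℝ))) T.toNNReal hle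
    calc ENNReal.ofReal a * T = ENNReal.ofReal (a * T.toReal) := by
          rw [ENNReal.ofReal_mul ha.le, ENNReal.ofReal_toReal hT]
      _ = ENNReal.ofReal ((a * T.toReal - b) + b) := by ring_nf
      _ ≤ ENNReal.ofReal (a * T.toReal - b) + ENNReal.ofReal b := ENNReal.ofReal_add_le
      _ ≤ ENNReal.ofReal (Ψ T.toReal) + ENNReal.ofReal b :=
          add_le_add_left (ENNReal.ofReal_le_ofReal (hΨlb _ hTr)) _
      _ ≤ PsiExt Ψ T + ENNReal.ofReal b := add_le_add_left hkey _

private lemma rpow_beta_le {x β θ : ℝ} (hx : 0 ≤ x) (hβ : 0 < β) (hβθ : β ≤ θ) :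
    x ^ β ≤ 1 + x ^ θ := by
  rcases le_or_gt x 1 with hx1 | hx1
  · have h1 : x ^ β ≤ 1 := Real.rpow_le_one hx hx1 hβ.le
    have h2 : (0:ℝ) ≤ x ^ θ := Real.rpow_nonneg hx θ
    linarith
  · have h1 : x ^ β ≤ x ^ θ := Real.rpow_le_rpow_of_exponent_le hx1.le hβθ
    linarith


/-- Lemma `lemm:proof-of-H-leq-L`: under (H1)–(H5), there exists `C' > 0` with `H(γ,γ̃) ≤ C'(L(γ) + L(γ̃) + 1)` for all curves `γ`, `γ̃`. -/
theorem Hcost_le_Lcost {d : ℕ}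
    (Ω : Set (EucSp d)) (hΩne : Ω.Nonempty) (hΩop : IsOpen Ω)
    (hΩbd : Bornology.IsBounded Ω)
    (Ξ : Set (EucSp d)) (hΞne : Ξ.Nonempty) (hΞcl : IsClosed Ξ) (hΞsub : Ξ ⊆ closure Ω)
    (ℓ : ℝ → EucSp d → EucSp d → ℝ)
    (hℓmeas : ∀ x p, Measurable fun t : ℝ => ℓ t x p)
    (hℓcont : ∀ᵐ t ∂(volume.restrict (Set.Ioi (0 : ℝ))),
      ContinuousOn (fun q : EucSp d × EucSp d => ℓ t q.1 q.2)
        ((closure Ω) ×ˢ (Set.univ : Set (EucSp d))))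
    (hℓconv : ∀ᵐ t ∂(volume.restrict (Set.Ioi (0 : ℝ))), ∀ x ∈ closure Ω,
      ConvexOn ℝ Set.univ fun p => ℓ t x p)
    (hℓnn : ∀ t ∈ Set.Ici (0 : ℝ), ∀ x ∈ closure Ω, ∀ p, 0 ≤ ℓ t x p)
    (α θ : ℝ) (hα : 0 < α) (hθ : 1 < θ)
    (hℓlb : ∀ t ∈ Set.Ici (0 : ℝ), ∀ x ∈ closure Ω, ∀ p, α * ‖p‖ ^ θ ≤ ℓ t x p)
    (h : ℝ → EucSp d → EucSp d → EucSp d → EucSp d → ℝ)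
    (hhmeas : ∀ x x' p p', Measurable fun t : ℝ => h t x x' p p')
    (hhcont : ∀ᵐ t ∂(volume.restrict (Set.Ioi (0 : ℝ))),
      ContinuousOn
        (fun q : (EucSp d × EucSp d) × EucSp d × EucSp d => h t q.1.1 q.1.2 q.2.1 q.2.2)
        (((closure Ω) ×ˢ (closure Ω)) ×ˢ (Set.univ : Set (EucSp d × EucSp d))))
    (hhconv : ∀ᵐ t ∂(volume.restrict (Set.Ioi (0 : ℝ))), ∀ x ∈ closure Ω, ∀ x' ∈ closure Ω,
      ConvexOn ℝ Set.univ fun q : EucSp d × EucSp d => h t x x' q.1 q.2)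
    (hhsymm : ∀ t x x' p p', h t x x' p p' = h t x' x p' p)
    (hhnn : ∀ t ∈ Set.Ici (0 : ℝ), ∀ x ∈ closure Ω, ∀ x' ∈ closure Ω, ∀ p p',
      0 ≤ h t x x' p p')
    (C β : ℝ) (hC : 0 < C) (hβ : 0 < β) (hβθ : β ≤ θ)
    (hhub : ∀ t ∈ Set.Ici (0 : ℝ), ∀ x ∈ closure Ω, ∀ x' ∈ closure Ω, ∀ p p',
      h t x x' p p' ≤ C * (‖p‖ ^ β + ‖p'‖ ^ β))
    (Ψ : ℝ → ℝ) (hΨnn : ∀ t ∈ Set.Ici (0 : ℝ), 0 ≤ Ψ t)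
    (hΨlsc : LowerSemicontinuousOn Ψ (Set.Ici 0)) (hΨmono : MonotoneOn Ψ (Set.Ici 0))
    (a b : ℝ) (ha : 0 < a) (hb : 0 < b)
    (hΨlb : ∀ t ∈ Set.Ici (0 : ℝ), a * t - b ≤ Ψ t) :
    ∃ C' : ℝ, 0 < C' ∧ ∀ γ γ' : CurveSp Ω,
      Hcost ℓ Ψ h Ξ γ γ' ≤ ENNReal.ofReal C' * (Lcost ℓ Ψ Ξ γ + Lcost ℓ Ψ Ξ γ' + 1) := by
  classical
  have hθ0 : (0:ℝ) ≤ θ := by linarith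
  set C' : ℝ := C * (2 * a⁻¹ * (1 + b) + 2 * α⁻¹) + 1 with hC'def
  have hinva : (0:ℝ) ≤ a⁻¹ := inv_nonneg.2 ha.le
  have hinvα : (0:ℝ) ≤ α⁻¹ := inv_nonneg.2 hα.le
  have hC'pos : 0 < C' := by
    have h1 : (0:ℝ) ≤ 2 * a⁻¹ * (1 + b) + 2 * α⁻¹ := by
      have h0 : (0:ℝ) ≤ 2 * a⁻¹ * (1 + b) :=
        mul_nonneg (mul_nonneg (by norm_num) hinva) (by linarith)
      linarith
    have h2 : (0:ℝ) ≤ C * (2 * a⁻¹ * (1 + b) + 2 * α⁻¹) := mul_nonneg hC.le h1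
    rw [hC'def]
    linarith
  refine ⟨C', hC'pos, fun γ γ' => ?_⟩
  rw [Hcost]
  split_ifs with hfin
  swap
  · rw [not_and_or, not_ne_iff, not_ne_iff] at hfin
    have htop : Lcost ℓ Ψ Ξ γ + Lcost ℓ Ψ Ξ γ' + 1 = ⊤ := by
      rcases hfin with hfin | hfin <;> simp [hfin]
    rw [htop, ENNReal.mul_top (ENNReal.ofReal_pos.2 hC'pos).ne']
  obtain ⟨hLγ, hLγ'⟩ := hfin
  have hA0 : ENNReal.ofReal α ≠ 0 := (ENNReal.ofReal_pos.2 hα).ne'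
  have hAt : ENNReal.ofReal α ≠ ⊤ := ENNReal.ofReal_ne_top
  have ha0 : ENNReal.ofReal a ≠ 0 := (ENNReal.ofReal_pos.2 ha).ne'
  have hat : ENNReal.ofReal a ≠ ⊤ := ENNReal.ofReal_ne_top
  -- the two parts of a finite cost are finite
  have hsplit : ∀ γ₀ : CurveSp Ω, Lcost ℓ Ψ Ξ γ₀ ≠ ⊤ →
      (⨅ (g : ℝ → EucSp d) (_ : HasVel γ₀ g),
        ∫⁻ t in Set.Ioi (0:ℝ), ENNReal.ofReal (ℓ t (γ₀.1 t.toNNReal) (g t))) ≠ ⊤ ∧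
      PsiExt Ψ (exitT Ξ γ₀) ≠ ⊤ := by
    intro γ₀ h₀
    rw [Lcost] at h₀
    exact ENNReal.add_ne_top.1 h₀
  -- choose near-optimal velocities
  have hexists : ∀ γ₀ : CurveSp Ω, Lcost ℓ Ψ Ξ γ₀ ≠ ⊤ →
      ∃ g : ℝ → EucSp d, HasVel γ₀ g ∧
        (∫⁻ t in Set.Ioi (0:ℝ), ENNReal.ofReal (ℓ t (γ₀.1 t.toNNReal) (g t)))
          ≤ Lcost ℓ Ψ Ξ γ₀ + 1 := by
    intro γ₀ h₀
    set I := ⨅ (g : ℝ → EucSp d) (_ : HasVel γ₀ g),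
        ∫⁻ t in Set.Ioi (0:ℝ), ENNReal.ofReal (ℓ t (γ₀.1 t.toNNReal) (g t)) with hIdef
    have hIne : I ≠ ⊤ := (hsplit γ₀ h₀).1
    have hIltL : I ≤ Lcost ℓ Ψ Ξ γ₀ := by
      rw [Lcost, ← hIdef]
      exact self_le_add_right _ _
    by_contra hcon
    push_neg at hcon
    have hbig : Lcost ℓ Ψ Ξ γ₀ + 1 ≤ I := le_iInf₂ fun g hg => (hcon g hg).le
    exact absurd (hbig.trans hIltL) (ENNReal.lt_add_right h₀ one_ne_zero).not_ge
  obtain ⟨g, hg, hgint⟩ := hexists γ hLγ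
  obtain ⟨g', hg', hgint'⟩ := hexists γ' hLγ'
  -- exit time bounds
  have hτbd : ∀ γ₀ : CurveSp Ω, Lcost ℓ Ψ Ξ γ₀ ≠ ⊤ →
      ENNReal.ofReal a * exitT Ξ γ₀ ≤ Lcost ℓ Ψ Ξ γ₀ + ENNReal.ofReal b := by
    intro γ₀ h₀
    refine (psiExt_lb Ψ a b ha hb hΨlb _).trans (add_le_add_left ?_ _)
    rw [Lcost]
    exact le_add_self
  have hτγ : exitT Ξ γ ≠ ⊤ := by
    intro htop
    have h1 := hτbd γ hLγ
    rw [htop, ENNReal.mul_top ha0] at h1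
    exact (ENNReal.add_ne_top.2 ⟨hLγ, ENNReal.ofReal_ne_top⟩) (top_le_iff.1 h1)
  set M := min (exitT Ξ γ) (exitT Ξ γ') with hMdef
  have hMne : M ≠ ⊤ := ne_top_of_le_ne_top hτγ (min_le_left _ _)
  have hMle : M ≤ (ENNReal.ofReal a)⁻¹ * (Lcost ℓ Ψ Ξ γ + ENNReal.ofReal b) := by
    have h1 : ENNReal.ofReal a * M ≤ Lcost ℓ Ψ Ξ γ + ENNReal.ofReal b :=
      (mul_le_mul_right (min_le_left _ _) _).trans (hτbd γ hLγ)
    calc M = (ENNReal.ofReal a)⁻¹ * (ENNReal.ofReal a * M) := by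
          rw [← mul_assoc, ENNReal.inv_mul_cancel ha0 hat, one_mul]
      _ ≤ _ := mul_le_mul_right h1 _
  have hSeq : {t : ℝ | 0 < t ∧ ENNReal.ofReal t < M} = Set.Ioo 0 M.toReal := by
    ext t
    simp only [Set.mem_setOf_eq, Set.mem_Ioo]
    exact and_congr_right fun ht => ENNReal.ofReal_lt_iff_lt_toReal ht.le hMne
  have hSm : MeasurableSet (Set.Ioo (0:ℝ) M.toReal) := measurableSet_Ioo
  -- step 1: interCost bounded by the integral for the chosen velocities
  have hstep1 : interCost h Ξ γ γ' ≤
      ∫⁻ t in Set.Ioo (0:ℝ) M.toReal,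
        ENNReal.ofReal (h t (γ.1 t.toNNReal) (γ'.1 t.toNNReal) (g t) (g' t)) := by
    rw [interCost, ← hMdef, hSeq]
    exact le_trans (iInf₂_le g hg) (iInf₂_le g' hg')
  set f₁ : ℝ → ℝ≥0∞ := fun t => ENNReal.ofReal (‖g t‖ ^ θ) with hf₁def
  set f₂ : ℝ → ℝ≥0∞ := fun t => ENNReal.ofReal (‖g' t‖ ^ θ) with hf₂def
  -- pointwise bound
  have hptwise : ∀ t ∈ Set.Ioo (0:ℝ) M.toReal,
      ENNReal.ofReal (h t (γ.1 t.toNNReal) (γ'.1 t.toNNReal) (g t) (g' t)) ≤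
        ENNReal.ofReal C * (2 + (f₁ t + f₂ t)) := by
    intro t ht
    have ht0 : (0:ℝ) ≤ t := ht.1.le
    have hreal : h t (γ.1 t.toNNReal) (γ'.1 t.toNNReal) (g t) (g' t) ≤
        C * (2 + (‖g t‖ ^ θ + ‖g' t‖ ^ θ)) := by
      have h1 := hhub t ht0 _ (γ.2 t.toNNReal) _ (γ'.2 t.toNNReal) (g t) (g' t)
      have h2 := rpow_beta_le (norm_nonneg (g t)) hβ hβθ
      have h3 := rpow_beta_le (norm_nonneg (g' t)) hβ hβθ
      have h4 : ‖g t‖ ^ β + ‖g' t‖ ^ β ≤ 2 + (‖g t‖ ^ θ + ‖g' t‖ ^ θ) := by linarith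
      exact h1.trans (mul_le_mul_of_nonneg_left h4 hC.le)
    calc ENNReal.ofReal (h t (γ.1 t.toNNReal) (γ'.1 t.toNNReal) (g t) (g' t))
        ≤ ENNReal.ofReal (C * (2 + (‖g t‖ ^ θ + ‖g' t‖ ^ θ))) :=
          ENNReal.ofReal_le_ofReal hreal
      _ = ENNReal.ofReal C * (2 + (f₁ t + f₂ t)) := by
          rw [ENNReal.ofReal_mul hC.le,
            ENNReal.ofReal_add (by norm_num : (0:ℝ) ≤ 2)
              (by positivity : (0:ℝ) ≤ ‖g t‖ ^ θ + ‖g' t‖ ^ θ),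
            ENNReal.ofReal_add (by positivity : (0:ℝ) ≤ ‖g t‖ ^ θ)
              (by positivity : (0:ℝ) ≤ ‖g' t‖ ^ θ)]
          norm_num [hf₁def, hf₂def]
  -- measurability of f₁
  have hmeasf : ∀ (γ₀ : CurveSp Ω) (g₀ : ℝ → EucSp d), HasVel γ₀ g₀ →
      AEMeasurable (fun t => ENNReal.ofReal (‖g₀ t‖ ^ θ))
        (volume.restrict (Set.Ioo (0:ℝ) M.toReal)) := by
    intro γ₀ g₀ hg₀
    have h1 : AEStronglyMeasurable g₀ (volume.restrict (Set.Ioo (0:ℝ) M.toReal)) :=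
      (hg₀.1 M.toReal).aestronglyMeasurable.mono_measure
        (Measure.restrict_mono Set.Ioo_subset_Icc_self le_rfl)
    exact ((Real.continuous_rpow_const hθ0).measurable.comp_aemeasurable
      h1.norm.aemeasurable).ennreal_ofReal
  -- integral bound for the velocity term
  have hf₁bd : ∀ (γ₀ : CurveSp Ω) (g₀ : ℝ → EucSp d), HasVel γ₀ g₀ →
      (∫⁻ t in Set.Ioo (0:ℝ) M.toReal, ENNReal.ofReal (‖g₀ t‖ ^ θ)) ≤
        (ENNReal.ofReal α)⁻¹ *
          (∫⁻ t in Set.Ioi (0:ℝ), ENNReal.ofReal (ℓ t (γ₀.1 t.toNNReal) (g₀ t))) := by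
    intro γ₀ g₀ hg₀
    have hmul : ENNReal.ofReal α *
        (∫⁻ t in Set.Ioo (0:ℝ) M.toReal, ENNReal.ofReal (‖g₀ t‖ ^ θ)) ≤
        ∫⁻ t in Set.Ioi (0:ℝ), ENNReal.ofReal (ℓ t (γ₀.1 t.toNNReal) (g₀ t)) := by
      rw [← lintegral_const_mul' _ _ hAt]
      refine le_trans (lintegral_mono_ae ?_)
        (lintegral_mono_set (Set.Ioo_subset_Ioi_self))
      rw [ae_restrict_iff' hSm]
      refine ae_of_all _ fun t ht => ?_
      rw [← ENNReal.ofReal_mul hα.le]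
      exact ENNReal.ofReal_le_ofReal (hℓlb t ht.1.le _ (γ₀.2 t.toNNReal) (g₀ t))
    calc (∫⁻ t in Set.Ioo (0:ℝ) M.toReal, ENNReal.ofReal (‖g₀ t‖ ^ θ))
        = (ENNReal.ofReal α)⁻¹ * (ENNReal.ofReal α *
            ∫⁻ t in Set.Ioo (0:ℝ) M.toReal, ENNReal.ofReal (‖g₀ t‖ ^ θ)) := by
          rw [← mul_assoc, ENNReal.inv_mul_cancel hA0 hAt, one_mul]
      _ ≤ _ := mul_le_mul_right hmul _
  set E := Lcost ℓ Ψ Ξ γ + Lcost ℓ Ψ Ξ γ' + 1 with hEdef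
  have hE1 : (1:ℝ≥0∞) ≤ E := le_add_self
  have hLγE : Lcost ℓ Ψ Ξ γ + 1 ≤ E := add_le_add_left (self_le_add_right _ _) 1
  have hLγ'E : Lcost ℓ Ψ Ξ γ' + 1 ≤ E := add_le_add_left le_add_self 1
  have hLbE : Lcost ℓ Ψ Ξ γ + ENNReal.ofReal b ≤ (1 + ENNReal.ofReal b) * E := by
    rw [add_mul, one_mul]
    refine add_le_add ?_ (le_mul_of_one_le_right zero_le hE1)
    exact (self_le_add_right _ _).trans (self_le_add_right _ _)
  have hμS : volume (Set.Ioo (0:ℝ) M.toReal) = M := by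
    rw [Real.volume_Ioo, sub_zero, ENNReal.ofReal_toReal hMne]
  calc interCost h Ξ γ γ'
      ≤ ∫⁻ t in Set.Ioo (0:ℝ) M.toReal,
          ENNReal.ofReal (h t (γ.1 t.toNNReal) (γ'.1 t.toNNReal) (g t) (g' t)) := hstep1
    _ ≤ ∫⁻ t in Set.Ioo (0:ℝ) M.toReal, ENNReal.ofReal C * (2 + (f₁ t + f₂ t)) :=
        lintegral_mono_ae ((ae_restrict_iff' hSm).2 (ae_of_all _ hptwise))
    _ = ENNReal.ofReal C * (2 * M +
          ((∫⁻ t in Set.Ioo (0:ℝ) M.toReal, f₁ t) +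
            (∫⁻ t in Set.Ioo (0:ℝ) M.toReal, f₂ t))) := by
        rw [lintegral_const_mul' _ _ ENNReal.ofReal_ne_top,
          lintegral_add_left measurable_const,
          setLIntegral_const, lintegral_add_left' (hmeasf γ g hg) _, hμS]
    _ ≤ ENNReal.ofReal C * (2 * ((ENNReal.ofReal a)⁻¹ * ((1 + ENNReal.ofReal b) * E)) +
          (((ENNReal.ofReal α)⁻¹ * E) + ((ENNReal.ofReal α)⁻¹ * E))) := by
        refine mul_le_mul_right (add_le_add ?_ (add_le_add ?_ ?_)) _
        · refine mul_le_mul_right (hMle.trans ?_) 2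
          exact mul_le_mul_right hLbE _
        · exact (hf₁bd γ g hg).trans
            (mul_le_mul_right (hgint.trans hLγE) _)
        · exact (hf₁bd γ' g' hg').trans
            (mul_le_mul_right (hgint'.trans hLγ'E) _)
    _ = (ENNReal.ofReal C * (2 * (ENNReal.ofReal a)⁻¹ * (1 + ENNReal.ofReal b) +
          2 * (ENNReal.ofReal α)⁻¹)) * E := by ring
    _ ≤ ENNReal.ofReal C' * E := by
        refine mul_le_mul_left ?_ E
        have heq : ENNReal.ofReal C * (2 * (ENNReal.ofReal a)⁻¹ * (1 + ENNReal.ofReal b) +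
            2 * (ENNReal.ofReal α)⁻¹)
            = ENNReal.ofReal (C * (2 * a⁻¹ * (1 + b) + 2 * α⁻¹)) := by
          rw [← ENNReal.ofReal_inv_of_pos ha, ← ENNReal.ofReal_inv_of_pos hα,
            ENNReal.ofReal_mul hC.le,
            ENNReal.ofReal_add
              (mul_nonneg (mul_nonneg (by norm_num) hinva) (by linarith))
              (mul_nonneg (by norm_num) hinvα),
            ENNReal.ofReal_mul (mul_nonneg (by norm_num) hinva),
            ENNReal.ofReal_mul (by norm_num : (0:ℝ) ≤ 2),
            ENNReal.ofReal_mul (by norm_num : (0:ℝ) ≤ 2),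
            ENNReal.ofReal_add (by norm_num : (0:ℝ) ≤ 1) hb.le]
          norm_num
        rw [heq]
        refine ENNReal.ofReal_le_ofReal ?_
        rw [hC'def]
        linarith

end
end

section
/- Assume (H1)–(H6) and let m₀ ∈ 𝓟(Ω̄). For Q ∈ 𝓟(Γ), let F₁(γ,Q) = ∫₀^∞ ℓ(t,γ(t),γ̇(t)) dt + Ψ(τ(γ)) + ∫_Γ ∫₀^{τ(γ)∧τ(γ̃)} h(t,γ(t),γ̃(t),γ̇(t),γ̃̇(t)) dt dQ(γ̃) (with F₁ = +∞ if γ is not absolutely continuous, if Q gives positive measure to non-absolutely-continuous curves, or if the inner integral is not Q-integrable), and let F₂(γ,Q) = L(γ) + ∫_Γ H(γ,γ̃) dQ(γ̃). Then Q ∈ 𝓟(Γ) satisfies (e₀)_#Q = m₀, ∫_Γ F₁(γ,Q) dQ(γ) < +∞, and F₁(γ,Q) = inf{F₁(ω,Q) : ω ∈ Γ, ω(0) = γ(0)} for Q-almost every γ, if and only if Q satisfies the same three conditions with F₁ replaced by F₂. -/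
open MeasureTheory Filter Topology Set
open scoped ENNReal NNReal

noncomputable section

variable {d : ℕ}

/-- A curve with no velocity has infinite cost. -/
lemma Lcost_eq_top_of_no_vel {Ω : Set (EucSp d)} {ℓ : ℝ → EucSp d → EucSp d → ℝ}
    {Ψ : ℝ → ℝ} {Ξ : Set (EucSp d)} {γ : CurveSp Ω}
    (hγ : ¬ ∃ g : ℝ → EucSp d, HasVel γ g) : Lcost ℓ Ψ Ξ γ = ⊤ := by
  rw [Lcost, iInf_eq_top.mpr, top_add]
  intro g
  exact iInf_eq_top.mpr fun hg => absurd ⟨g, hg⟩ hγ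

/-- Carathéodory-type composition measurability. -/
lemma cara {X : Type*} [MetricSpace X] [MeasurableSpace X] [BorelSpace X]
    [SecondCountableTopology X] {μ : Measure ℝ} {F : ℝ → X → ℝ} {S : Set X}
    (hS : IsClosed S) {y₀ : X} (hy₀ : y₀ ∈ S)
    (hFm : ∀ x, Measurable fun t => F t x)
    (hFc : ∀ t, ContinuousOn (F t) S)
    {u : ℝ → X} (hu : AEMeasurable u μ) (huS : ∀ t, u t ∈ S) :
    AEMeasurable (fun t => F t (u t)) μ := by
  classical
  set v := hu.mk u with hv_def
  have hv : Measurable v := hu.measurable_mk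
  have huv : u =ᵐ[μ] v := hu.ae_eq_mk
  set w : ℝ → X := fun t => if v t ∈ S then v t else y₀ with hw_def
  have hw : Measurable w := Measurable.ite (hv hS.measurableSet) hv measurable_const
  have hwS : ∀ t, w t ∈ S := by
    intro t; by_cases hvt : v t ∈ S <;> simp [hw_def, hvt, hy₀]
  have huw : u =ᵐ[μ] w := by
    filter_upwards [huv] with t ht
    have hvS : v t ∈ S := ht ▸ huS t
    simp only [hw_def, if_pos hvS, ← ht]
  have hsf : ∀ s : SimpleFunc ℝ X, Measurable fun t => F t (s t) := by
    intro s
    have heq : (fun t => F t (s t)) =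
        fun t => ∑ y ∈ s.range, if s t = y then F t y else 0 := by
      funext t
      rw [Finset.sum_ite_eq s.range (s t) fun y => F t y,
        if_pos (SimpleFunc.mem_range_self s t)]
    rw [heq]
    exact Finset.measurable_sum _ fun y _ =>
      Measurable.ite (s.measurableSet_fiber y) (hFm y) measurable_const
  set sn := fun n => SimpleFunc.approxOn w hw S y₀ hy₀ n with hsn
  have hg : Measurable fun t => F t (w t) := by
    apply measurable_of_tendsto_metrizable (fun n => hsf (sn n))
    rw [tendsto_pi_nhds]
    intro t
    have h1 : Tendsto (fun n => sn n t) atTop (𝓝 (w t)) :=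
      SimpleFunc.tendsto_approxOn hw hy₀ (by rw [hS.closure_eq]; exact hwS t)
    have h2 : Tendsto (fun n => sn n t) atTop (𝓝[S] (w t)) :=
      tendsto_nhdsWithin_iff.mpr ⟨h1, Eventually.of_forall fun n =>
        SimpleFunc.approxOn_mem hw hy₀ n t⟩
    exact ((hFc t (w t) (hwS t)).tendsto).comp h2
  exact ⟨fun t => F t (w t), hg, huw.mono fun t ht => by simp only [ht]⟩

/-- The key quantitative bound on the interaction cost. -/
lemma key_bound {d : ℕ} {Ω Ξ : Set (EucSp d)}
    {ℓ : ℝ → EucSp d → EucSp d → ℝ}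
    (hℓmeas : ∀ x p, Measurable fun t : ℝ => ℓ t x p)
    (hℓcont : ∀ᵐ t ∂(volume.restrict (Set.Ioi (0 : ℝ))),
      ContinuousOn (fun q : EucSp d × EucSp d => ℓ t q.1 q.2)
        ((closure Ω) ×ˢ (Set.univ : Set (EucSp d))))
    {α θ : ℝ} (hα : 0 < α)
    (hℓlb : ∀ t ∈ Set.Ici (0 : ℝ), ∀ x ∈ closure Ω, ∀ p, α * ‖p‖ ^ θ ≤ ℓ t x p)
    {h : ℝ → EucSp d → EucSp d → EucSp d → EucSp d → ℝ}
    {C β : ℝ} (hC : 0 < C) (hβ : 0 < β) (hβθ : β ≤ θ)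
    (hhub : ∀ t ∈ Set.Ici (0 : ℝ), ∀ x ∈ closure Ω, ∀ x' ∈ closure Ω, ∀ p p',
      h t x x' p p' ≤ C * (‖p‖ ^ β + ‖p'‖ ^ β))
    {Ψ : ℝ → ℝ} {a b κ : ℝ} (ha : 0 < a) (hκ : 0 < κ)
    (hΨlb : ∀ t ∈ Set.Ici (0 : ℝ), a * t - b ≤ Ψ t)
    {x₀ : EucSp d} (hx₀ : x₀ ∈ closure Ω)
    (ω γ' : CurveSp Ω) (hω : Lcost ℓ Ψ Ξ ω ≤ ENNReal.ofReal κ) :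
    interCost h Ξ ω γ' ≤
      (2 * ENNReal.ofReal C * ENNReal.ofReal ((κ + b) / a)
        + ENNReal.ofReal C * (ENNReal.ofReal α)⁻¹ * (ENNReal.ofReal κ + 1)
        + ENNReal.ofReal C * (ENNReal.ofReal α)⁻¹)
      + ENNReal.ofReal C * (ENNReal.ofReal α)⁻¹ * Lcost ℓ Ψ Ξ γ' := by
  classical
  have hα0 : ENNReal.ofReal α ≠ 0 := (ENNReal.ofReal_pos.mpr hα).ne'
  have hαtop : ENNReal.ofReal α ≠ ⊤ := ENNReal.ofReal_ne_top
  have hc'top : ENNReal.ofReal C * (ENNReal.ofReal α)⁻¹ ≠ ⊤ :=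
    ENNReal.mul_ne_top ENNReal.ofReal_ne_top (ENNReal.inv_ne_top.mpr hα0)
  have hc'0 : ENNReal.ofReal C * (ENNReal.ofReal α)⁻¹ ≠ 0 :=
    mul_ne_zero (ENNReal.ofReal_pos.mpr hC).ne' (ENNReal.inv_ne_zero.mpr hαtop)
  by_cases hLγ' : Lcost ℓ Ψ Ξ γ' = ⊤
  · rw [hLγ', ENNReal.mul_top hc'0, add_top]
    exact le_top
  have hωne : Lcost ℓ Ψ Ξ ω ≠ ⊤ := ne_top_of_le_ne_top ENNReal.ofReal_ne_top hω
  set T : ℝ := (κ + b) / a with hTdef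
  -- exit-time bound
  have hτ : ∀ t : ℝ, 0 < t → ENNReal.ofReal t < exitT Ξ ω → t ≤ T := by
    intro t ht0 htτ
    have h1 : ENNReal.ofReal (Ψ ((t.toNNReal : ℝ))) ≤ PsiExt Ψ (exitT Ξ ω) :=
      le_iSup₂ (f := fun (s : ℝ≥0) (_ : (s : ℝ≥0∞) ≤ exitT Ξ ω) =>
        ENNReal.ofReal (Ψ (s : ℝ))) t.toNNReal (le_of_lt htτ)
    have h2 : PsiExt Ψ (exitT Ξ ω) ≤ ENNReal.ofReal κ := by
      refine le_trans ?_ hω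
      rw [Lcost]; exact le_add_self
    have h3 : Ψ t ≤ κ := by
      rw [Real.coe_toNNReal t ht0.le] at h1
      exact (ENNReal.ofReal_le_ofReal_iff hκ.le).mp (h1.trans h2)
    have h4 := hΨlb t ht0.le
    rw [hTdef, le_div_iff₀ ha]
    linarith
  -- choose velocities
  have hωκ1 : (⨅ (g : ℝ → EucSp d) (_ : HasVel ω g),
      ∫⁻ t in Set.Ioi (0 : ℝ), ENNReal.ofReal (ℓ t (ω.1 t.toNNReal) (g t)))
      < ENNReal.ofReal κ + 1 := by
    refine lt_of_le_of_lt ?_ (ENNReal.lt_add_right ENNReal.ofReal_ne_top one_ne_zero)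
    refine le_trans ?_ hω
    rw [Lcost]; exact le_self_add
  rw [iInf_lt_iff] at hωκ1
  obtain ⟨g, hg⟩ := hωκ1
  rw [iInf_lt_iff] at hg
  obtain ⟨hvg, hJg⟩ := hg
  have hγ'1 : (⨅ (g : ℝ → EucSp d) (_ : HasVel γ' g),
      ∫⁻ t in Set.Ioi (0 : ℝ), ENNReal.ofReal (ℓ t (γ'.1 t.toNNReal) (g t)))
      < Lcost ℓ Ψ Ξ γ' + 1 := by
    have hle : (⨅ (g : ℝ → EucSp d) (_ : HasVel γ' g),
        ∫⁻ t in Set.Ioi (0 : ℝ), ENNReal.ofReal (ℓ t (γ'.1 t.toNNReal) (g t)))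
        ≤ Lcost ℓ Ψ Ξ γ' := by rw [Lcost]; exact le_self_add
    exact lt_of_le_of_lt hle (ENNReal.lt_add_right hLγ' one_ne_zero)
  rw [iInf_lt_iff] at hγ'1
  obtain ⟨g', hg'⟩ := hγ'1
  rw [iInf_lt_iff] at hg'
  obtain ⟨hvg', hJg'⟩ := hg'
  -- the region
  set R : Set ℝ := {t : ℝ | 0 < t ∧ ENNReal.ofReal t < min (exitT Ξ ω) (exitT Ξ γ')}
    with hRdef
  set f : ℝ → ℝ≥0∞ := fun t =>
    ENNReal.ofReal (h t (ω.1 t.toNNReal) (γ'.1 t.toNNReal) (g t) (g' t)) with hfdef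
  have hstep : interCost h Ξ ω γ' ≤ ∫⁻ t in R, f t := by
    rw [interCost]
    exact iInf_le_of_le g (iInf_le_of_le hvg (iInf_le_of_le g'
      (iInf_le_of_le hvg' le_rfl)))
  have hRsub : R ⊆ Set.Ioc 0 T := fun t ht =>
    ⟨ht.1, hτ t ht.1 (lt_of_lt_of_le ht.2 (min_le_left _ _))⟩
  have hRmeas : MeasurableSet R := by
    have hRe : R = Set.Ioi (0 : ℝ) ∩
        ENNReal.ofReal ⁻¹' (Set.Iio (min (exitT Ξ ω) (exitT Ξ γ'))) := rfl
    rw [hRe]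
    exact measurableSet_Ioi.inter (ENNReal.measurable_ofReal measurableSet_Iio)
  have hind : ∫⁻ t in R, f t = ∫⁻ t in Set.Ioc (0 : ℝ) T, R.indicator f t := by
    rw [← lintegral_indicator hRmeas, ← lintegral_indicator measurableSet_Ioc,
      Set.indicator_indicator, Set.inter_eq_self_of_subset_right hRsub]
  -- pointwise bound
  set B : ℝ → ℝ≥0∞ := fun t => 2 * ENNReal.ofReal C +
    (ENNReal.ofReal C * (ENNReal.ofReal α)⁻¹ *
        ENNReal.ofReal (ℓ t (ω.1 t.toNNReal) (g t)) +
      ENNReal.ofReal C * (ENNReal.ofReal α)⁻¹ *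
        ENNReal.ofReal (ℓ t (γ'.1 t.toNNReal) (g' t))) with hBdef
  have hpow : ∀ t : ℝ, 0 ≤ t → ∀ p : EucSp d, ∀ x, x ∈ closure Ω →
      ENNReal.ofReal (‖p‖ ^ β) ≤ 1 + (ENNReal.ofReal α)⁻¹ * ENNReal.ofReal (ℓ t x p) := by
    intro t ht0 p x hx
    have r1 : ‖p‖ ^ β ≤ 1 + ‖p‖ ^ θ := by
      rcases le_total ‖p‖ 1 with h1 | h1
      · have h2 := Real.rpow_le_one (norm_nonneg p) h1 hβ.le
        have h3 := Real.rpow_nonneg (norm_nonneg p) θ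
        linarith
      · have h2 := Real.rpow_le_rpow_of_exponent_le h1 hβθ
        linarith
    have r3 : ENNReal.ofReal α * ENNReal.ofReal (‖p‖ ^ θ) ≤ ENNReal.ofReal (ℓ t x p) := by
      rw [← ENNReal.ofReal_mul hα.le]
      exact ENNReal.ofReal_le_ofReal (hℓlb t ht0 x hx p)
    have r2 : ENNReal.ofReal (‖p‖ ^ θ) ≤ (ENNReal.ofReal α)⁻¹ * ENNReal.ofReal (ℓ t x p) := by
      calc ENNReal.ofReal (‖p‖ ^ θ)
          = (ENNReal.ofReal α)⁻¹ * (ENNReal.ofReal α * ENNReal.ofReal (‖p‖ ^ θ)) := by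
            rw [← mul_assoc, ENNReal.inv_mul_cancel hα0 hαtop, one_mul]
        _ ≤ (ENNReal.ofReal α)⁻¹ * ENNReal.ofReal (ℓ t x p) := mul_le_mul_right r3 _
    calc ENNReal.ofReal (‖p‖ ^ β) ≤ ENNReal.ofReal (1 + ‖p‖ ^ θ) :=
          ENNReal.ofReal_le_ofReal r1
      _ = 1 + ENNReal.ofReal (‖p‖ ^ θ) := by
          rw [ENNReal.ofReal_add zero_le_one (Real.rpow_nonneg (norm_nonneg p) θ),
            ENNReal.ofReal_one]
      _ ≤ 1 + (ENNReal.ofReal α)⁻¹ * ENNReal.ofReal (ℓ t x p) := add_le_add_right r2 _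
  have hpt : ∀ t, R.indicator f t ≤ B t := by
    intro t
    by_cases htR : t ∈ R
    · rw [Set.indicator_of_mem htR]
      have ht0 : (0 : ℝ) ≤ t := htR.1.le
      have hub := hhub t ht0 _ (ω.2 t.toNNReal) _ (γ'.2 t.toNNReal) (g t) (g' t)
      calc f t ≤ ENNReal.ofReal (C * (‖g t‖ ^ β + ‖g' t‖ ^ β)) :=
            ENNReal.ofReal_le_ofReal hub
        _ = ENNReal.ofReal C * (ENNReal.ofReal (‖g t‖ ^ β) + ENNReal.ofReal (‖g' t‖ ^ β)) := by
            rw [ENNReal.ofReal_mul hC.le, ENNReal.ofReal_add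
              (Real.rpow_nonneg (norm_nonneg _) β) (Real.rpow_nonneg (norm_nonneg _) β)]
        _ ≤ ENNReal.ofReal C *
            ((1 + (ENNReal.ofReal α)⁻¹ * ENNReal.ofReal (ℓ t (ω.1 t.toNNReal) (g t))) +
             (1 + (ENNReal.ofReal α)⁻¹ * ENNReal.ofReal (ℓ t (γ'.1 t.toNNReal) (g' t)))) :=
            mul_le_mul_right (add_le_add
              (hpow t ht0 (g t) _ (ω.2 t.toNNReal))
              (hpow t ht0 (g' t) _ (γ'.2 t.toNNReal))) _
        _ = B t := by rw [hBdef]; ring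
    · rw [Set.indicator_of_notMem htR]
      exact zero_le
  -- a.e. measurability of the two Lagrangian compositions
  have hScl : IsClosed ((closure Ω) ×ˢ (Set.univ : Set (EucSp d))) :=
    isClosed_closure.prod isClosed_univ
  have hy₀S : ((x₀, (0 : EucSp d)) : EucSp d × EucSp d) ∈
      (closure Ω) ×ˢ (Set.univ : Set (EucSp d)) := ⟨hx₀, Set.mem_univ _⟩
  rw [ae_iff] at hℓcont
  set N : Set ℝ := toMeasurable (volume.restrict (Set.Ioi (0 : ℝ)))
    {t : ℝ | ¬ ContinuousOn (fun q : EucSp d × EucSp d => ℓ t q.1 q.2)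
      ((closure Ω) ×ˢ (Set.univ : Set (EucSp d)))} with hNdef
  have hNmeas : MeasurableSet N := measurableSet_toMeasurable _ _
  have hN0 : (volume.restrict (Set.Ioi (0 : ℝ))) N = 0 := by
    rw [hNdef, measure_toMeasurable]; exact hℓcont
  have hNc : ∀ t ∉ N, ContinuousOn (fun q : EucSp d × EucSp d => ℓ t q.1 q.2)
      ((closure Ω) ×ˢ (Set.univ : Set (EucSp d))) := fun t ht =>
    not_not.mp fun hc => ht (subset_toMeasurable _ _ hc)
  set F : ℝ → EucSp d × EucSp d → ℝ :=
    fun t q => if t ∈ N then 0 else ℓ t q.1 q.2 with hFdef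
  have hFm : ∀ q : EucSp d × EucSp d, Measurable fun t => F t q := fun q =>
    Measurable.ite hNmeas measurable_const (hℓmeas q.1 q.2)
  have hFc : ∀ t, ContinuousOn (F t) ((closure Ω) ×ˢ (Set.univ : Set (EucSp d))) := by
    intro t
    by_cases htN : t ∈ N
    · simp only [hFdef, if_pos htN]
      exact continuousOn_const
    · simp only [hFdef, if_neg htN]
      exact hNc t htN
  have hνN : (volume.restrict (Set.Ioc (0 : ℝ) T)) N = 0 := by
    refine le_antisymm ?_ zero_le
    calc (volume.restrict (Set.Ioc (0 : ℝ) T)) N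
        ≤ (volume.restrict (Set.Ioi (0 : ℝ))) N :=
          Measure.le_iff'.mp (Measure.restrict_mono Set.Ioc_subset_Ioi_self le_rfl) N
      _ = 0 := hN0
  have hcomp : ∀ (γ₀ : CurveSp Ω) (g₀ : ℝ → EucSp d), HasVel γ₀ g₀ →
      AEMeasurable (fun t => ENNReal.ofReal (ℓ t (γ₀.1 t.toNNReal) (g₀ t)))
        (volume.restrict (Set.Ioc (0 : ℝ) T)) := by
    intro γ₀ g₀ hv₀
    have h1 : Continuous fun t : ℝ => (γ₀.1 t.toNNReal : EucSp d) :=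
      γ₀.1.continuous.comp continuous_real_toNNReal
    have h2 : AEMeasurable g₀ (volume.restrict (Set.Ioc (0 : ℝ) T)) :=
      ((hv₀.1 T).aemeasurable).mono_measure
        (Measure.restrict_mono Set.Ioc_subset_Icc_self le_rfl)
    have hu : AEMeasurable (fun t : ℝ => ((γ₀.1 t.toNNReal : EucSp d), g₀ t))
        (volume.restrict (Set.Ioc (0 : ℝ) T)) := (h1.aemeasurable).prodMk h2
    have hcmp := cara hScl hy₀S hFm hFc hu
      (fun t => ⟨γ₀.2 t.toNNReal, Set.mem_univ _⟩)
    have hequ : (fun t => F t ((γ₀.1 t.toNNReal : EucSp d), g₀ t))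
        =ᵐ[volume.restrict (Set.Ioc (0 : ℝ) T)]
        fun t => ℓ t (γ₀.1 t.toNNReal) (g₀ t) := by
      refine ae_iff.mpr (measure_mono_null ?_ hνN)
      intro t ht
      by_contra htN
      exact ht (by simp only [hFdef, if_neg htN])
    exact ENNReal.measurable_ofReal.comp_aemeasurable (hcmp.congr hequ)
  have hmω := hcomp ω g hvg
  have hmγ' := hcomp γ' g' hvg'
  -- integral computation
  have hν : (volume.restrict (Set.Ioc (0 : ℝ) T)) Set.univ = ENNReal.ofReal T := by
    rw [Measure.restrict_apply_univ, Real.volume_Ioc, sub_zero]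
  have hJω2 : ∫⁻ t in Set.Ioc (0 : ℝ) T,
      ENNReal.ofReal (ℓ t (ω.1 t.toNNReal) (g t)) ≤ ENNReal.ofReal κ + 1 :=
    le_trans (lintegral_mono' (Measure.restrict_mono Set.Ioc_subset_Ioi_self le_rfl)
      le_rfl) hJg.le
  have hJγ'2 : ∫⁻ t in Set.Ioc (0 : ℝ) T,
      ENNReal.ofReal (ℓ t (γ'.1 t.toNNReal) (g' t)) ≤ Lcost ℓ Ψ Ξ γ' + 1 :=
    le_trans (lintegral_mono' (Measure.restrict_mono Set.Ioc_subset_Ioi_self le_rfl)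
      le_rfl) hJg'.le
  calc interCost h Ξ ω γ' ≤ ∫⁻ t in R, f t := hstep
    _ = ∫⁻ t in Set.Ioc (0 : ℝ) T, R.indicator f t := hind
    _ ≤ ∫⁻ t in Set.Ioc (0 : ℝ) T, B t := lintegral_mono hpt
    _ = 2 * ENNReal.ofReal C * ENNReal.ofReal T +
        (ENNReal.ofReal C * (ENNReal.ofReal α)⁻¹ *
            (∫⁻ t in Set.Ioc (0 : ℝ) T, ENNReal.ofReal (ℓ t (ω.1 t.toNNReal) (g t))) +
          ENNReal.ofReal C * (ENNReal.ofReal α)⁻¹ *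
            (∫⁻ t in Set.Ioc (0 : ℝ) T, ENNReal.ofReal (ℓ t (γ'.1 t.toNNReal) (g' t)))) := by
        rw [hBdef, lintegral_add_left' aemeasurable_const, lintegral_const, hν,
          lintegral_add_left' (hmω.const_mul _) _,
          lintegral_const_mul' _ _ hc'top, lintegral_const_mul' _ _ hc'top]
    _ ≤ 2 * ENNReal.ofReal C * ENNReal.ofReal T +
        (ENNReal.ofReal C * (ENNReal.ofReal α)⁻¹ * (ENNReal.ofReal κ + 1) +
          ENNReal.ofReal C * (ENNReal.ofReal α)⁻¹ * (Lcost ℓ Ψ Ξ γ' + 1)) := by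
        gcongr
    _ = (2 * ENNReal.ofReal C * ENNReal.ofReal ((κ + b) / a)
          + ENNReal.ofReal C * (ENNReal.ofReal α)⁻¹ * (ENNReal.ofReal κ + 1)
          + ENNReal.ofReal C * (ENNReal.ofReal α)⁻¹)
        + ENNReal.ofReal C * (ENNReal.ofReal α)⁻¹ * Lcost ℓ Ψ Ξ γ' := by
        rw [← hTdef]; ring

/-- Proposition `prop:same-equilibria`: under (H1)–(H6), `Q` is an equilibrium of the mean field game (cost `F₁`) with initial condition `m₀` if and only if it is an equilibrium of the associated abstract non-atomic game (cost `F₂`). -/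
theorem equilibrium_F1_iff_equilibrium_F2 {d : ℕ}
    (Ω : Set (EucSp d)) (hΩne : Ω.Nonempty) (hΩop : IsOpen Ω)
    (hΩbd : Bornology.IsBounded Ω)
    (Ξ : Set (EucSp d)) (hΞne : Ξ.Nonempty) (hΞcl : IsClosed Ξ) (hΞsub : Ξ ⊆ closure Ω)
    (ℓ : ℝ → EucSp d → EucSp d → ℝ)
    (hℓmeas : ∀ x p, Measurable fun t : ℝ => ℓ t x p)
    (hℓcont : ∀ᵐ t ∂(volume.restrict (Set.Ioi (0 : ℝ))),
      ContinuousOn (fun q : EucSp d × EucSp d => ℓ t q.1 q.2)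
        ((closure Ω) ×ˢ (Set.univ : Set (EucSp d))))
    (hℓconv : ∀ᵐ t ∂(volume.restrict (Set.Ioi (0 : ℝ))), ∀ x ∈ closure Ω,
      ConvexOn ℝ Set.univ fun p => ℓ t x p)
    (hℓnn : ∀ t ∈ Set.Ici (0 : ℝ), ∀ x ∈ closure Ω, ∀ p, 0 ≤ ℓ t x p)
    (α θ : ℝ) (hα : 0 < α) (hθ : 1 < θ)
    (hℓlb : ∀ t ∈ Set.Ici (0 : ℝ), ∀ x ∈ closure Ω, ∀ p, α * ‖p‖ ^ θ ≤ ℓ t x p)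
    (h : ℝ → EucSp d → EucSp d → EucSp d → EucSp d → ℝ)
    (hhmeas : ∀ x x' p p', Measurable fun t : ℝ => h t x x' p p')
    (hhcont : ∀ᵐ t ∂(volume.restrict (Set.Ioi (0 : ℝ))),
      ContinuousOn
        (fun q : (EucSp d × EucSp d) × EucSp d × EucSp d => h t q.1.1 q.1.2 q.2.1 q.2.2)
        (((closure Ω) ×ˢ (closure Ω)) ×ˢ (Set.univ : Set (EucSp d × EucSp d))))
    (hhconv : ∀ᵐ t ∂(volume.restrict (Set.Ioi (0 : ℝ))), ∀ x ∈ closure Ω, ∀ x' ∈ closure Ω,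
      ConvexOn ℝ Set.univ fun q : EucSp d × EucSp d => h t x x' q.1 q.2)
    (hhsymm : ∀ t x x' p p', h t x x' p p' = h t x' x p' p)
    (hhnn : ∀ t ∈ Set.Ici (0 : ℝ), ∀ x ∈ closure Ω, ∀ x' ∈ closure Ω, ∀ p p',
      0 ≤ h t x x' p p')
    (C β : ℝ) (hC : 0 < C) (hβ : 0 < β) (hβθ : β ≤ θ)
    (hhub : ∀ t ∈ Set.Ici (0 : ℝ), ∀ x ∈ closure Ω, ∀ x' ∈ closure Ω, ∀ p p',
      h t x x' p p' ≤ C * (‖p‖ ^ β + ‖p'‖ ^ β))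
    (Ψ : ℝ → ℝ) (hΨnn : ∀ t ∈ Set.Ici (0 : ℝ), 0 ≤ Ψ t)
    (hΨlsc : LowerSemicontinuousOn Ψ (Set.Ici 0)) (hΨmono : MonotoneOn Ψ (Set.Ici 0))
    (a b : ℝ) (ha : 0 < a) (hb : 0 < b)
    (hΨlb : ∀ t ∈ Set.Ici (0 : ℝ), a * t - b ≤ Ψ t)
    (κ : ℝ) (hκ : 0 < κ)
    (hH6 : ∀ x₀ ∈ closure Ω, ∃ γ : CurveSp Ω, γ.1 0 = x₀ ∧ Lcost ℓ Ψ Ξ γ ≤ ENNReal.ofReal κ)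
    (m₀ : Measure (EucSp d)) (hm₀ : IsProbabilityMeasure m₀) (hm₀supp : m₀ (closure Ω) = 1)
    (Q : Measure (CurveSp Ω)) (hQ : IsProbabilityMeasure Q) :
    ((Q.map (fun γ : CurveSp Ω => γ.1 0) = m₀ ∧
      (∫⁻ γ, F1cost ℓ Ψ h Ξ γ Q ∂Q) ≠ ⊤ ∧
      ∀ᵐ γ ∂Q, F1cost ℓ Ψ h Ξ γ Q =
        ⨅ (ω : CurveSp Ω) (_ : ω.1 0 = γ.1 0), F1cost ℓ Ψ h Ξ ω Q)
    ↔
    (Q.map (fun γ : CurveSp Ω => γ.1 0) = m₀ ∧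
      (∫⁻ γ, F2cost ℓ Ψ h Ξ γ Q ∂Q) ≠ ⊤ ∧
      ∀ᵐ γ ∂Q, F2cost ℓ Ψ h Ξ γ Q =
        ⨅ (ω : CurveSp Ω) (_ : ω.1 0 = γ.1 0), F2cost ℓ Ψ h Ξ ω Q)) := by
  classical
  obtain ⟨x₀, hx₀'⟩ := hΩne
  have hx₀ : x₀ ∈ closure Ω := subset_closure hx₀'
  set c4 : ℝ≥0∞ := ENNReal.ofReal C * (ENNReal.ofReal α)⁻¹ with hc4def
  set c3 : ℝ≥0∞ := 2 * ENNReal.ofReal C * ENNReal.ofReal ((κ + b) / a)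
    + c4 * (ENNReal.ofReal κ + 1) + c4 with hc3def
  have hα0 : ENNReal.ofReal α ≠ 0 := (ENNReal.ofReal_pos.mpr hα).ne'
  have hc4top : c4 ≠ ⊤ :=
    ENNReal.mul_ne_top ENNReal.ofReal_ne_top (ENNReal.inv_ne_top.mpr hα0)
  have hc40 : c4 ≠ 0 :=
    mul_ne_zero (ENNReal.ofReal_pos.mpr hC).ne' (ENNReal.inv_ne_zero.mpr ENNReal.ofReal_ne_top)
  have hc3top : c3 ≠ ⊤ := by
    rw [hc3def]
    refine ENNReal.add_ne_top.mpr ⟨ENNReal.add_ne_top.mpr ⟨?_, ?_⟩, hc4top⟩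
    · exact ENNReal.mul_ne_top (ENNReal.mul_ne_top (by simp) ENNReal.ofReal_ne_top)
        ENNReal.ofReal_ne_top
    · exact ENNReal.mul_ne_top hc4top (ENNReal.add_ne_top.mpr ⟨ENNReal.ofReal_ne_top, by simp⟩)
  -- key bounds
  have key : ∀ ω' : CurveSp Ω, Lcost ℓ Ψ Ξ ω' ≤ ENNReal.ofReal κ →
      ∀ γ' : CurveSp Ω, interCost h Ξ ω' γ' ≤ c3 + c4 * Lcost ℓ Ψ Ξ γ' :=
    fun ω' hω' γ' =>
      key_bound hℓmeas hℓcont hα hℓlb hC hβ hβθ hhub ha hκ hΨlb hx₀ ω' γ' hω'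
  have keyH : ∀ ω' : CurveSp Ω, Lcost ℓ Ψ Ξ ω' ≤ ENNReal.ofReal κ →
      ∀ γ' : CurveSp Ω, Hcost ℓ Ψ h Ξ ω' γ' ≤ c3 + c4 * Lcost ℓ Ψ Ξ γ' := by
    intro ω' hω' γ'
    by_cases hLγ' : Lcost ℓ Ψ Ξ γ' = ⊤
    · rw [hLγ', ENNReal.mul_top hc40, add_top]
      exact le_top
    · rw [Hcost, if_pos ⟨ne_top_of_le_ne_top ENNReal.ofReal_ne_top hω', hLγ'⟩]
      exact key ω' hω' γ'
  set M : ℝ≥0∞ := ∫⁻ γ', Lcost ℓ Ψ Ξ γ' ∂Q with hMdef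
  have hQbound : ∀ f : CurveSp Ω → ℝ≥0∞,
      (∀ γ', f γ' ≤ c3 + c4 * Lcost ℓ Ψ Ξ γ') → ∫⁻ γ', f γ' ∂Q ≤ c3 + c4 * M := by
    intro f hf
    calc ∫⁻ γ', f γ' ∂Q ≤ ∫⁻ γ', (c3 + c4 * Lcost ℓ Ψ Ξ γ') ∂Q := lintegral_mono hf
      _ = c3 * Q Set.univ + c4 * M := by
          rw [lintegral_add_left measurable_const, lintegral_const,
            lintegral_const_mul' _ _ hc4top]
      _ = c3 + c4 * M := by rw [measure_univ, mul_one]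
  -- common derivation of "a.e. finite individual cost"
  have dir : ∀ F : CurveSp Ω → ℝ≥0∞,
      (∀ γ, Lcost ℓ Ψ Ξ γ ≤ F γ) →
      (∀ ω' : CurveSp Ω, Lcost ℓ Ψ Ξ ω' ≤ ENNReal.ofReal κ →
        F ω' ≤ ENNReal.ofReal κ + (c3 + c4 * M)) →
      (∫⁻ γ, F γ ∂Q) ≠ ⊤ →
      (∀ᵐ γ ∂Q, F γ = ⨅ (ω : CurveSp Ω) (_ : ω.1 0 = γ.1 0), F ω) →
      ∀ᵐ γ ∂Q, Lcost ℓ Ψ Ξ γ ≠ ⊤ := by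
    intro F hLF hFκ hint hopt
    have hM : M ≠ ⊤ := fun htop => hint (top_unique (htop ▸ lintegral_mono hLF))
    have hK : ENNReal.ofReal κ + (c3 + c4 * M) ≠ ⊤ :=
      ENNReal.add_ne_top.mpr ⟨ENNReal.ofReal_ne_top,
        ENNReal.add_ne_top.mpr ⟨hc3top, ENNReal.mul_ne_top hc4top hM⟩⟩
    filter_upwards [hopt] with γ hγ
    obtain ⟨ωγ, hω0, hωκ⟩ := hH6 (γ.1 0) (γ.2 0)
    have h1 : F γ ≤ ENNReal.ofReal κ + (c3 + c4 * M) := by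
      rw [hγ]
      exact le_trans (iInf₂_le ωγ hω0) (hFκ ωγ hωκ)
    exact fun hLtop => hK (top_unique (le_trans (hLtop ▸ hLF γ) h1))
  -- pointwise equality of the two costs, given a.e. finiteness
  have feq : (∀ᵐ γ ∂Q, Lcost ℓ Ψ Ξ γ ≠ ⊤) →
      ∀ γ, F1cost ℓ Ψ h Ξ γ Q = F2cost ℓ Ψ h Ξ γ Q := by
    intro hW γ
    have hWnull : Q {γ' : CurveSp Ω | Lcost ℓ Ψ Ξ γ' = ⊤} = 0 := by
      have := ae_iff.mp hW
      simpa using this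
    have hbad : Q {γ' : CurveSp Ω | ¬ ∃ g : ℝ → EucSp d, HasVel γ' g} = 0 :=
      measure_mono_null (fun γ' hγ' => Lcost_eq_top_of_no_vel hγ') hWnull
    rw [F1cost, if_pos hbad, F2cost]
    by_cases hLγ : Lcost ℓ Ψ Ξ γ = ⊤
    · rw [hLγ, top_add, top_add]
    · congr 1
      refine lintegral_congr_ae ?_
      filter_upwards [hW] with γ' hγ'
      rw [Hcost, if_pos ⟨hLγ, hγ'⟩]
  constructor
  · rintro ⟨hmap, hb1, hc1⟩
    have hbad : Q {γ' : CurveSp Ω | ¬ ∃ g : ℝ → EucSp d, HasVel γ' g} = 0 := by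
      by_contra hQb
      apply hb1
      have hall : ∀ γ : CurveSp Ω, F1cost ℓ Ψ h Ξ γ Q = ⊤ := fun γ => by
        rw [F1cost, if_neg hQb]
      rw [lintegral_congr hall, lintegral_const, measure_univ, mul_one]
    have hLleF : ∀ γ, Lcost ℓ Ψ Ξ γ ≤ F1cost ℓ Ψ h Ξ γ Q := fun γ => by
      rw [F1cost, if_pos hbad]; exact le_self_add
    have hFκ : ∀ ω' : CurveSp Ω, Lcost ℓ Ψ Ξ ω' ≤ ENNReal.ofReal κ →
        F1cost ℓ Ψ h Ξ ω' Q ≤ ENNReal.ofReal κ + (c3 + c4 * M) := by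
      intro ω' hω'
      rw [F1cost, if_pos hbad]
      exact add_le_add hω' (hQbound _ (key ω' hω'))
    have hW := dir _ hLleF hFκ hb1 hc1
    have hfeq := feq hW
    refine ⟨hmap, ?_, ?_⟩
    · rwa [lintegral_congr fun γ => (hfeq γ).symm]
    · filter_upwards [hc1] with γ hγ
      rw [← hfeq γ, hγ]
      exact iInf_congr fun ω => iInf_congr fun _ => hfeq ω
  · rintro ⟨hmap, hb2, hc2⟩
    have hLleF : ∀ γ, Lcost ℓ Ψ Ξ γ ≤ F2cost ℓ Ψ h Ξ γ Q := fun γ => by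
      rw [F2cost]; exact le_self_add
    have hFκ : ∀ ω' : CurveSp Ω, Lcost ℓ Ψ Ξ ω' ≤ ENNReal.ofReal κ →
        F2cost ℓ Ψ h Ξ ω' Q ≤ ENNReal.ofReal κ + (c3 + c4 * M) := by
      intro ω' hω'
      rw [F2cost]
      exact add_le_add hω' (hQbound _ (keyH ω' hω'))
    have hW := dir _ hLleF hFκ hb2 hc2
    have hfeq := feq hW
    refine ⟨hmap, ?_, ?_⟩
    · rwa [lintegral_congr hfeq]
    · filter_upwards [hc2] with γ hγ
      rw [hfeq γ, hγ]
      exact iInf_congr fun ω => iInf_congr fun _ => (hfeq ω).symm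


end
end
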